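/- arXiv:2106.06818 — 8 statements merged into one kernel-verified Lean document; each statement's English description precedes it below -/
import Mathlib

section
/- Let B : H → H be β-cocoercive and M : H → H a strongly positive bounded self-adjoint linear operator with ‖M⁻¹‖ ≤ β/κ for some κ > 0. Then M⁻¹B is κ-cocoercive with respect to the inner product ⟨x, y⟩_M := ⟨Mx, y⟩, i.e., ⟨M⁻¹Bx - M⁻¹By, x - y⟩_M ≥ κ‖M⁻¹Bx - M⁻¹By‖²_M for all x, y ∈ H. -/
local notation "⟪" x ", " y "⟫" => @inner ℝ _ _ x y

/-- If `B` is `β`-cocoercive and `M` is strongly positive with `‖M⁻¹‖ ≤ β/κ`,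
then `M⁻¹B` is `κ`-cocoercive with respect to the `M`-inner product
`⟪x, y⟫_M = ⟪Mx, y⟫`. -/
theorem stmt_6 {H : Type*} [NormedAddCommGroup H] [InnerProductSpace ℝ H]
    (β κ : ℝ) (hβ : 0 < β) (hκ : 0 < κ) (B : H → H)
    (hB : ∀ x y : H, ⟪B x - B y, x - y⟫ ≥ β * ‖B x - B y‖ ^ 2)
    (M Minv : H →L[ℝ] H)
    (hMinv : ∀ x : H, Minv (M x) = x ∧ M (Minv x) = x)
    (hMsa : ∀ x y : H, ⟪M x, y⟫ = ⟪x, M y⟫)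
    (hMpos : ∃ m : ℝ, 0 < m ∧ ∀ x : H, ⟪M x, x⟫ ≥ m * ‖x‖ ^ 2)
    (hMinvNorm : ‖Minv‖ ≤ β / κ) :
    ∀ x y : H, ⟪M (Minv (B x) - Minv (B y)), x - y⟫ ≥
      κ * ⟪M (Minv (B x) - Minv (B y)), Minv (B x) - Minv (B y)⟫ := by
  intro x y
  set u := B x - B y with hu
  have hMv : M (Minv (B x) - Minv (B y)) = u := by
    rw [map_sub, (hMinv (B x)).2, (hMinv (B y)).2]
  have hv : Minv (B x) - Minv (B y) = Minv u := by rw [hu, map_sub]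
  rw [hMv, hv]
  have h1 : ⟪u, x - y⟫ ≥ β * ‖u‖ ^ 2 := hB x y
  have h2 : ⟪u, Minv u⟫ ≤ ‖u‖ * ‖Minv u‖ := real_inner_le_norm u (Minv u)
  have h3 : ‖Minv u‖ ≤ ‖Minv‖ * ‖u‖ := Minv.le_opNorm u
  have h4 : κ * ‖Minv‖ ≤ β := by
    rw [le_div_iff₀ hκ] at hMinvNorm; linarith [hMinvNorm]
  have hun : 0 ≤ ‖u‖ := norm_nonneg u
  calc κ * ⟪u, Minv u⟫ ≤ κ * (‖u‖ * (‖Minv‖ * ‖u‖)) := by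
        apply mul_le_mul_of_nonneg_left _ hκ.le
        exact h2.trans (mul_le_mul_of_nonneg_left h3 hun)
    _ = (κ * ‖Minv‖) * ‖u‖ ^ 2 := by ring
    _ ≤ β * ‖u‖ ^ 2 := by
        apply mul_le_mul_of_nonneg_right h4 (sq_nonneg _)
    _ ≤ ⟪u, x - y⟫ := h1
end

section
/- Let γ ≠ 0, A : H → 2^H with J^M_{γA} single-valued and everywhere defined, B : H → H, and M strongly positive. Then x ∈ Zer(A + B) if and only if A_γ((I - γM⁻¹B)x) + Bx = 0, where A_γ = (A⁻¹ + γI)⁻¹ is the Yosida approximation of A (single-valued and everywhere defined since J^M_{γA} is). -/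
local notation "⟪" x ", " y "⟫" => @inner ℝ _ _ x y

/-- `x ∈ Zer(A + B)` iff `A_γ((I - γM⁻¹B)x) + Bx = 0`, where `A_γ` is the
(single-valued, everywhere defined) Yosida approximation of `A`, so that
`J^M_{γA} = I - γM⁻¹A_γ` is the resolvent. -/
theorem stmt_9 {H : Type*} [NormedAddCommGroup H] [InnerProductSpace ℝ H]
    (γ : ℝ) (hγ : γ ≠ 0) (A : H → Set H) (B : H → H)
    (M Minv : H →L[ℝ] H)
    (hMinv : ∀ x : H, Minv (M x) = x ∧ M (Minv x) = x)
    (hMsa : ∀ x y : H, ⟪M x, y⟫ = ⟪x, M y⟫)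
    (hMpos : ∃ m : ℝ, 0 < m ∧ ∀ x : H, ⟪M x, x⟫ ≥ m * ‖x‖ ^ 2)
    (Aγ : H → H)
    -- `Aγ` is the Yosida approximation of `A` and `J^M_{γA} = I - γM⁻¹Aγ`:
    (hAγ : ∀ x : H, Aγ x ∈ A (x - γ • Minv (Aγ x)))
    -- single-valuedness of the resolvent `J^M_{γA}`:
    (hJuniq : ∀ x y : H, (∃ w ∈ A y, x = y + γ • Minv w) → y = x - γ • Minv (Aγ x)) :
    ∀ x : H, (∃ a ∈ A x, a + B x = 0) ↔ Aγ (x - γ • Minv (B x)) + B x = 0 := by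
  intro x
  set z := x - γ • Minv (B x) with hz
  constructor
  · rintro ⟨a, ha, hab⟩
    have haB : a = -B x := by linear_combination (norm := abel) hab
    have hzx : z = x + γ • Minv a := by
      rw [haB, map_neg, smul_neg, hz]; abel
    have h := hJuniq z x ⟨a, ha, hzx⟩
    -- x = z - γ • Minv (Aγ z)
    have h2 : γ • Minv (Aγ z) = γ • Minv a := by
      have : x = x + γ • Minv a - γ • Minv (Aγ z) := by rw [← hzx, h]
      have := congrArg (fun t => t - x + γ • Minv (Aγ z)) this
      linear_combination (norm := abel) this
    have h3 : Minv (Aγ z) = Minv a := smul_right_injective H hγ h2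
    have h4 : Aγ z = a := by
      have := congrArg M h3
      rwa [(hMinv (Aγ z)).2, (hMinv a).2] at this
    rw [h4, hab]
  · intro h
    refine ⟨Aγ z, ?_, h⟩
    have hx : z - γ • Minv (Aγ z) = x := by
      have hAzB : Aγ z = -B x := by linear_combination (norm := abel) h
      rw [hAzB, map_neg, smul_neg, hz]; abel
    have := hAγ z
    rwa [hx] at this
end

section
/- Let T : H → H be an α-averaged operator for some α ∈ (0,1) with Fix(T) ≠ ∅, and let λ : [0,∞) → [0,∞) be Lebesgue measurable with 0 < λ_low ≤ λ(t) ≤ λ_up for all t. Let u : [0,∞) → H be a locally absolutely continuous solution of u̇(t) = λ(t)(T(u(t)) - u(t)) with u(0) = u₀. Then the energy k(t) := (1/2)‖u(t) - u*‖² satisfies, for every fixed point u* of T and almost every t, the dissipation inequality k̇(t) + (1/(2α λ_up))‖u̇(t)‖² ≤ 0; in particular t ↦ ‖u(t) - u*‖ is nonincreasing, the trajectory u is bounded, and u̇ ∈ L²([0,∞); H). -/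
open MeasureTheory

open Set
open scoped RealInnerProductSpace

lemma fubini_half_sq {H : Type*} [NormedAddCommGroup H] [InnerProductSpace ℝ H] [CompleteSpace H]
    {f : ℝ → H} {s t : ℝ} (hst : s ≤ t) (hf : IntegrableOn f (Set.Ioc s t)) :
    (∫ r in Set.Ioc s t, ⟪f r, (∫ q in Set.Ioc s r, f q)⟫)
      = (1/2) * ‖∫ r in Set.Ioc s t, f r‖^2 := by
  set μ := volume.restrict (Set.Ioc s t) with hμdef
  have hfi : Integrable f μ := hf
  set I := ∫ r, f r ∂μ with hI
  set Φ : ℝ × ℝ → ℝ := fun p => ⟪f p.1, f p.2⟫ with hΦ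
  have hΦm : AEStronglyMeasurable Φ (μ.prod μ) := by
    rw [hΦ]; exact hfi.1.comp_fst.inner hfi.1.comp_snd
  have hΦi : Integrable Φ (μ.prod μ) := by
    refine Integrable.mono' ((hfi.norm).mul_prod (hfi.norm)) hΦm ?_
    refine Filter.Eventually.of_forall fun p => ?_
    simpa [Real.norm_eq_abs] using abs_real_inner_le_norm (f p.1) (f p.2)
  have hDle : MeasurableSet {p : ℝ × ℝ | p.2 ≤ p.1} :=
    measurableSet_le measurable_snd measurable_fst
  have hDlt : MeasurableSet {p : ℝ × ℝ | p.2 < p.1} :=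
    measurableSet_lt measurable_snd measurable_fst
  have hDlt' : MeasurableSet {p : ℝ × ℝ | p.1 < p.2} :=
    measurableSet_lt measurable_fst measurable_snd
  set φ : ℝ × ℝ → ℝ := ({p : ℝ × ℝ | p.2 ≤ p.1}).indicator Φ with hφ
  set φlt : ℝ × ℝ → ℝ := ({p : ℝ × ℝ | p.2 < p.1}).indicator Φ with hφlt
  set ψ : ℝ × ℝ → ℝ := ({p : ℝ × ℝ | p.1 < p.2}).indicator Φ with hψ
  have hφi : Integrable φ (μ.prod μ) := hΦi.indicator hDle
  have hφlti : Integrable φlt (μ.prod μ) := hΦi.indicator hDlt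
  have hψi : Integrable ψ (μ.prod μ) := hΦi.indicator hDlt'
  -- X + Y = ‖I‖²
  have hsum : (∫ p, φ p ∂(μ.prod μ)) + (∫ p, ψ p ∂(μ.prod μ)) = ‖I‖^2 := by
    rw [← integral_add hφi hψi]
    have h1 : ∀ p : ℝ × ℝ, φ p + ψ p = Φ p := by
      intro p
      by_cases h : p.2 ≤ p.1
      · have h2 : ¬ p.1 < p.2 := not_lt.mpr h
        simp [hφ, hψ, Set.indicator_of_mem, Set.indicator_of_notMem, h, h2]
      · have h2 : p.1 < p.2 := not_le.mp h
        simp [hφ, hψ, Set.indicator_of_mem, Set.indicator_of_notMem, h, h2]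
    rw [integral_congr_ae (Filter.Eventually.of_forall h1)]
    rw [MeasureTheory.integral_prod _ hΦi]
    have h2 : ∀ r, (∫ q, Φ (r, q) ∂μ) = ⟪f r, I⟫ := fun r => integral_inner hfi (f r)
    rw [integral_congr_ae (Filter.Eventually.of_forall h2)]
    have h3 : ∀ r, ⟪f r, I⟫ = ⟪I, f r⟫ := fun r => real_inner_comm _ _
    rw [integral_congr_ae (Filter.Eventually.of_forall h3), integral_inner hfi I,
      real_inner_self_eq_norm_sq]
  -- Y = ∫ φlt (swap)
  have hswap : (∫ p, ψ p ∂(μ.prod μ)) = ∫ p, φlt p ∂(μ.prod μ) := by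
    rw [← MeasureTheory.integral_prod_swap ψ]
    refine integral_congr_ae (Filter.Eventually.of_forall fun p => ?_)
    by_cases h : p.2 < p.1
    · simp only [hψ, hφlt, Prod.swap]
      rw [Set.indicator_of_mem (by simpa using h), Set.indicator_of_mem (by simpa using h)]
      exact real_inner_comm _ _
    · simp only [hψ, hφlt, Prod.swap]
      rw [Set.indicator_of_notMem (by simpa using h), Set.indicator_of_notMem (by simpa using h)]
  -- φ - φlt integrates to zero (diagonal is null)
  have hdiag : (μ.prod μ) {p : ℝ × ℝ | p.2 = p.1} = 0 := by
    have hm : MeasurableSet {p : ℝ × ℝ | p.2 = p.1} :=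
      measurableSet_eq_fun measurable_snd measurable_fst
    rw [Measure.prod_apply hm]
    have hz : ∀ x : ℝ, μ (Prod.mk x ⁻¹' {p : ℝ × ℝ | p.2 = p.1}) = 0 := by
      intro x
      have hx : (Prod.mk x ⁻¹' {p : ℝ × ℝ | p.2 = p.1}) = {x} := by
        ext y; simp [eq_comm]
      rw [hx, hμdef, Measure.restrict_apply (measurableSet_singleton x)]
      exact measure_mono_null Set.inter_subset_left (measure_singleton x)
    simp [hz]
  have hXY : (∫ p, φ p ∂(μ.prod μ)) = ∫ p, φlt p ∂(μ.prod μ) := by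
    have hsub : (∫ p, φ p ∂(μ.prod μ)) - (∫ p, φlt p ∂(μ.prod μ))
        = ∫ p, (φ p - φlt p) ∂(μ.prod μ) := (integral_sub hφi hφlti).symm
    have hae : ∀ᵐ p ∂(μ.prod μ), φ p - φlt p = 0 := by
      have : ∀ᵐ p ∂(μ.prod μ), p ∉ {p : ℝ × ℝ | p.2 = p.1} :=
        (ae_iff.2 (by simpa using hdiag))
      filter_upwards [this] with p hp
      have hne : p.2 ≠ p.1 := hp
      by_cases h : p.2 ≤ p.1
      · have h2 : p.2 < p.1 := lt_of_le_of_ne h hne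
        simp [hφ, hφlt, Set.indicator_of_mem, h, h2]
      · have h2 : ¬ p.2 < p.1 := fun hc => h hc.le
        simp [hφ, hφlt, Set.indicator_of_notMem, h, h2]
    have hzero : (∫ p, (φ p - φlt p) ∂(μ.prod μ)) = 0 := by
      rw [integral_congr_ae hae, integral_zero]
    rw [hzero] at hsub
    linarith
  have hX : (∫ p, φ p ∂(μ.prod μ)) = (1/2) * ‖I‖^2 := by
    have h := hsum
    rw [hswap, ← hXY] at h
    linarith
  -- identify LHS with X
  have hG : ∀ r ∈ Set.Ioc s t, ⟪f r, (∫ q in Set.Ioc s r, f q)⟫ = ∫ q, φ (r, q) ∂μ := by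
    intro r hr
    have hset : Set.Iic r ∩ Set.Ioc s t = Set.Ioc s r := by
      ext q
      constructor
      · rintro ⟨hq1, hq2, hq3⟩; exact ⟨hq2, hq1⟩
      · rintro ⟨hq1, hq2⟩; exact ⟨hq2, hq1, hq2.trans hr.2⟩
    have h1 : (∫ q in Set.Ioc s r, f q) = ∫ q, (Set.Iic r).indicator f q ∂μ := by
      rw [integral_indicator measurableSet_Iic, hμdef,
        Measure.restrict_restrict measurableSet_Iic, hset]
    rw [h1]
    have h2 := (ContinuousLinearMap.integral_comp_comm (innerSL ℝ (f r))
      (hfi.indicator (measurableSet_Iic (a := r)))).symm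
    simp only [innerSL_apply_apply] at h2
    rw [h2]
    refine integral_congr_ae ?_
    filter_upwards [] with q
    by_cases h : q ≤ r
    · have hmem : (r, q) ∈ {p : ℝ × ℝ | p.2 ≤ p.1} := h
      simp only [hφ, Set.indicator_of_mem hmem, Set.indicator_of_mem (Set.mem_Iic.mpr h), hΦ]
    · have hmem : (r, q) ∉ {p : ℝ × ℝ | p.2 ≤ p.1} := h
      simp only [hφ, Set.indicator_of_notMem hmem,
        Set.indicator_of_notMem (fun hc => h (Set.mem_Iic.mp hc)), inner_zero_right]
  calc (∫ r in Set.Ioc s t, ⟪f r, (∫ q in Set.Ioc s r, f q)⟫)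
      = ∫ r, (∫ q, φ (r, q) ∂μ) ∂μ := by
        refine integral_congr_ae ?_
        have hmem := ae_restrict_mem (μ := volume) (measurableSet_Ioc (a := s) (b := t))
        rw [← hμdef] at hmem
        filter_upwards [hmem] with r hr
        exact hG r hr
    _ = ∫ p, φ p ∂(μ.prod μ) := (MeasureTheory.integral_prod _ hφi).symm
    _ = (1/2) * ‖I‖^2 := hX

lemma pw_ineq {H : Type*} [NormedAddCommGroup H] [InnerProductSpace ℝ H]
    {α : ℝ} (hα : α ∈ Set.Ioo (0:ℝ) 1) {T : H → H} {R : H → H}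
    (hR : ∀ x y : H, ‖R x - R y‖ ≤ ‖x - y‖) (hTR : ∀ x, T x = (1-α) • x + α • R x)
    {ustar : H} (hust : T ustar = ustar)
    {lamr lamLow lamUp : ℝ} (hlow : 0 < lamLow) (hb1 : lamLow ≤ lamr) (hb2 : lamr ≤ lamUp)
    (x : H) :
    ⟪lamr • (T x - x), x - ustar⟫ + (1/(2*α*lamUp)) * ‖lamr • (T x - x)‖^2 ≤ 0 := by
  obtain ⟨hα0, hα1⟩ := hα
  have hlr : 0 < lamr := hlow.trans_le hb1
  have hup : 0 < lamUp := hlr.trans_le hb2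
  have hRu : R ustar = ustar := by
    have h := hTR ustar
    rw [hust] at h
    have h2 : α • R ustar = α • ustar := by
      have : (1-α) • ustar + α • R ustar = (1-α) • ustar + α • ustar := by
        rw [← h]; module
      exact add_left_cancel this
    exact smul_right_injective H hα0.ne' h2
  have hTx : T x - x = α • (R x - x) := by
    rw [hTR x]; module
  have hnr : ‖R x - ustar‖ ≤ ‖x - ustar‖ := by
    have := hR x ustar; rwa [hRu] at this
  have hsq : ‖R x - ustar‖^2 ≤ ‖x - ustar‖^2 := by
    have h1 := norm_nonneg (R x - ustar)
    nlinarith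
  have hdecomp : R x - ustar = (x - ustar) - (x - R x) := by abel
  have hexp : ‖R x - ustar‖^2
      = ‖x - ustar‖^2 - 2 * ⟪x - ustar, x - R x⟫ + ‖x - R x‖^2 := by
    rw [hdecomp, norm_sub_sq_real]
  have hcoco : ‖x - R x‖^2 ≤ 2 * ⟪x - ustar, x - R x⟫ := by linarith
  set a : ℝ := ⟪R x - x, x - ustar⟫ with ha
  set s : ℝ := ‖R x - x‖^2 with hs
  have hs0 : 0 ≤ s := by positivity
  have hsx : ‖x - R x‖^2 = s := by rw [hs, norm_sub_rev]
  have haval : a = - ⟪x - ustar, x - R x⟫ :=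
    calc a = ⟪x - ustar, R x - x⟫ := real_inner_comm (x - ustar) (R x - x)
      _ = - ⟪x - ustar, x - R x⟫ := by
          rw [show R x - x = -(x - R x) from by abel, inner_neg_right]
  have hale : a ≤ -(s/2) := by
    rw [haval]; rw [hsx] at hcoco; linarith
  have hinner : ⟪lamr • (T x - x), x - ustar⟫ = lamr * (α * a) := by
    rw [hTx, real_inner_smul_left, real_inner_smul_left]
  have hnorm : ‖lamr • (T x - x)‖^2 = lamr^2 * (α^2 * s) := by
    rw [hTx, norm_smul, norm_smul, Real.norm_eq_abs, Real.norm_eq_abs,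
      abs_of_pos hlr, abs_of_pos hα0]
    ring
  rw [hinner, hnorm]
  have h1 : (1/(2*α*lamUp)) * (lamr^2 * (α^2 * s)) ≤ lamr * α * s / 2 := by
    rw [div_mul_eq_mul_div, one_mul, div_le_div_iff₀ (by positivity) (by norm_num)]
    nlinarith [mul_nonneg (mul_nonneg (mul_nonneg (sub_nonneg.mpr hb2) hlr.le)
      (mul_pos hα0 hα0).le) hs0]
  have h2 : lamr * (α * a) ≤ lamr * (α * (-(s/2))) := by
    have := mul_le_mul_of_nonneg_left hale hα0.le
    exact mul_le_mul_of_nonneg_left this hlr.le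
  nlinarith

lemma ftc_k {H : Type*} [NormedAddCommGroup H] [InnerProductSpace ℝ H] [CompleteSpace H]
    {u u' : ℝ → H}
    (hint : ∀ t : ℝ, 0 ≤ t → u t = u 0 + ∫ s in (0 : ℝ)..t, u' s)
    {s t : ℝ} (hs : 0 ≤ s) (hst : s ≤ t) (hi : IntervalIntegrable u' volume 0 t)
    (ustar : H) :
    (1/2)*‖u t - ustar‖^2 - (1/2)*‖u s - ustar‖^2
      = ∫ r in Set.Ioc s t, ⟪u' r, u r - ustar⟫ := by
  have ht : (0:ℝ) ≤ t := hs.trans hst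
  have hmem : ∀ r, s ≤ r → r ≤ t → r ∈ Set.uIcc (0:ℝ) t := by
    intro r h1 h2
    rw [Set.uIcc_of_le ht]
    exact ⟨hs.trans h1, h2⟩
  have hII : ∀ r, s ≤ r → r ≤ t → IntervalIntegrable u' volume 0 r := by
    intro r h1 h2
    exact hi.mono_set (Set.uIcc_subset_uIcc Set.left_mem_uIcc (hmem r h1 h2))
  have hi'' : IntegrableOn u' (Set.Ioc s t) := by
    have := (intervalIntegrable_iff_integrableOn_Ioc_of_le ht).mp hi
    exact this.mono_set (Set.Ioc_subset_Ioc_left hs)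
  have hiIcc : IntegrableOn u' (Set.Icc s t) :=
    (integrableOn_Icc_iff_integrableOn_Ioc).mpr hi''
  -- v r - (v s) = primitive
  have hv : ∀ r, s ≤ r → r ≤ t →
      u r - ustar = (u s - ustar) + ∫ q in Set.Ioc s r, u' q := by
    intro r h1 h2
    have h3 : u r - u s = ∫ q in s..r, u' q := by
      rw [hint r (hs.trans h1), hint s hs]
      rw [show u 0 + (∫ q in (0:ℝ)..r, u' q) - (u 0 + ∫ q in (0:ℝ)..s, u' q)
        = (∫ q in (0:ℝ)..r, u' q) - ∫ q in (0:ℝ)..s, u' q from by abel]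
      exact intervalIntegral.integral_interval_sub_left (hII r h1 h2) (hII s le_rfl hst)
    rw [intervalIntegral.integral_of_le h1] at h3
    rw [← h3]; abel
  set c := u s - ustar with hc
  set G : ℝ → H := fun r => ∫ q in Set.Ioc s r, u' q with hG
  -- continuity & boundedness of G
  have hGcont : ContinuousOn G (Set.Icc s t) := intervalIntegral.continuousOn_primitive hiIcc
  set M : ℝ := ∫ q in Set.Ioc s t, ‖u' q‖ with hM
  have hGb : ∀ r ∈ Set.Icc s t, ‖G r‖ ≤ M := by
    intro r hr
    refine (norm_integral_le_integral_norm _).trans ?_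
    refine setIntegral_mono_set hi''.norm ?_ ?_
    · exact Filter.Eventually.of_forall fun q => norm_nonneg _
    · exact HasSubset.Subset.eventuallyLE (Set.Ioc_subset_Ioc_right hr.2)
  -- integrability of the two inner-product pieces
  have hone : IntegrableOn (fun r => ⟪u' r, c⟫) (Set.Ioc s t) := by
    have h := (innerSL ℝ c).integrable_comp hi''
    refine h.congr (Filter.Eventually.of_forall fun r => ?_)
    simp only [innerSL_apply_apply]
    exact (real_inner_comm c (u' r)).symm
  have hGm : AEStronglyMeasurable G (volume.restrict (Set.Ioc s t)) := by
    have h1 : AEStronglyMeasurable G (volume.restrict (Set.Icc s t)) :=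
      hGcont.aestronglyMeasurable measurableSet_Icc
    exact h1.mono_measure (Measure.restrict_mono Set.Ioc_subset_Icc_self le_rfl)
  have htwo : IntegrableOn (fun r => ⟪u' r, G r⟫) (Set.Ioc s t) := by
    refine Integrable.mono' (hi''.norm.mul_const M)
      (hi''.aestronglyMeasurable.inner hGm) ?_
    filter_upwards [ae_restrict_mem measurableSet_Ioc] with r hr
    refine (norm_inner_le_norm _ _).trans ?_
    exact mul_le_mul_of_nonneg_left (hGb r (Set.Ioc_subset_Icc_self hr)) (norm_nonneg _)
  -- main computation
  have hsplit : (∫ r in Set.Ioc s t, ⟪u' r, u r - ustar⟫)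
      = (∫ r in Set.Ioc s t, ⟪u' r, c⟫) + ∫ r in Set.Ioc s t, ⟪u' r, G r⟫ := by
    rw [← integral_add hone htwo]
    refine integral_congr_ae ?_
    filter_upwards [ae_restrict_mem measurableSet_Ioc] with r hr
    rw [hv r hr.1.le hr.2, inner_add_right]
  set w : H := ∫ r in Set.Ioc s t, u' r with hw
  have hcross : (∫ r in Set.Ioc s t, ⟪u' r, c⟫) = ⟪w, c⟫ := by
    have h1 : (∫ r in Set.Ioc s t, ⟪c, u' r⟫) = ⟪c, w⟫ := integral_inner hi'' c
    calc (∫ r in Set.Ioc s t, ⟪u' r, c⟫) = ∫ r in Set.Ioc s t, ⟪c, u' r⟫ :=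
          integral_congr_ae (Filter.Eventually.of_forall fun r => real_inner_comm c (u' r))
      _ = ⟪c, w⟫ := h1
      _ = ⟪w, c⟫ := (real_inner_comm c w).symm
  have hsq : (∫ r in Set.Ioc s t, ⟪u' r, G r⟫) = (1/2) * ‖w‖^2 :=
    fubini_half_sq hst hi''
  have hvt : u t - ustar = c + w := hv t hst le_rfl
  have hnorm : ‖u t - ustar‖^2 = ‖c‖^2 + 2 * ⟪c, w⟫ + ‖w‖^2 := by
    rw [hvt, norm_add_sq_real]
  rw [hsplit, hcross, hsq, hnorm, hc]
  have : ⟪w, c⟫ = ⟪c, w⟫ := real_inner_comm c w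
  linarith

lemma key_ineq {H : Type*} [NormedAddCommGroup H] [InnerProductSpace ℝ H] [CompleteSpace H]
    {α : ℝ} (hα : α ∈ Set.Ioo (0:ℝ) 1) {T : H → H} {R : H → H}
    (hR : ∀ x y : H, ‖R x - R y‖ ≤ ‖x - y‖) (hTR : ∀ x, T x = (1-α) • x + α • R x)
    {ustar : H} (hust : T ustar = ustar)
    {lam : ℝ → ℝ} {lamLow lamUp : ℝ} (hlow : 0 < lamLow)
    (hbounds : ∀ t : ℝ, 0 ≤ t → lamLow ≤ lam t ∧ lam t ≤ lamUp)
    {u u' : ℝ → H}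
    (hint : ∀ t : ℝ, 0 ≤ t → u t = u 0 + ∫ s in (0 : ℝ)..t, u' s)
    (hode : ∀ᵐ t ∂(volume.restrict (Set.Ici (0 : ℝ))), u' t = lam t • (T (u t) - u t))
    {s t : ℝ} (hs : 0 ≤ s) (hst : s ≤ t) (hi : IntervalIntegrable u' volume 0 t) :
    (1/2)*‖u t - ustar‖^2 + (1/(2*α*lamUp)) * (∫ r in Set.Ioc s t, ‖u' r‖^2)
      ≤ (1/2)*‖u s - ustar‖^2 := by
  have ht : (0:ℝ) ≤ t := hs.trans hst
  have hi0 : IntegrableOn u' (Set.Ioc 0 t) :=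
    (intervalIntegrable_iff_integrableOn_Ioc_of_le ht).mp hi
  have hi'' : IntegrableOn u' (Set.Ioc s t) := hi0.mono_set (Set.Ioc_subset_Ioc_left hs)
  have hiIcc0 : IntegrableOn u' (Set.Icc 0 t) :=
    (integrableOn_Icc_iff_integrableOn_Ioc).mpr hi0
  -- continuity of u on [0, t]
  have hucont : ContinuousOn u (Set.Icc 0 t) := by
    have hprim : ContinuousOn (fun x => ∫ q in Set.Ioc 0 x, u' q) (Set.Icc 0 t) :=
      intervalIntegral.continuousOn_primitive hiIcc0
    have h2 : ContinuousOn (fun x => u 0 + ∫ q in Set.Ioc 0 x, u' q) (Set.Icc 0 t) :=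
      continuousOn_const.add hprim
    refine h2.congr ?_
    intro r hr
    rw [hint r hr.1, intervalIntegral.integral_of_le hr.1]
  -- bound for ‖u r - ustar‖ on [0, t]
  obtain ⟨M, hM⟩ : ∃ M, ∀ r ∈ Set.Icc (0:ℝ) t, ‖u r - ustar‖ ≤ M :=
    isCompact_Icc.exists_bound_of_continuousOn (hucont.sub continuousOn_const)
  have hM0 : 0 ≤ M := le_trans (norm_nonneg _) (hM 0 ⟨le_rfl, ht⟩)
  -- a.e. facts on Ioc s t
  have hsub : Set.Ioc s t ⊆ Set.Ici (0:ℝ) := fun r hr => hs.trans hr.1.le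
  have hode' : ∀ᵐ r ∂(volume.restrict (Set.Ioc s t)), u' r = lam r • (T (u r) - u r) :=
    ae_restrict_of_ae_restrict_of_subset hsub hode
  have hTsub : ∀ x : H, ‖T x - x‖ ≤ 2 * ‖x - ustar‖ := by
    intro x
    have h1 : ‖T x - T ustar‖ ≤ ‖x - ustar‖ := by
      rw [hTR x, hTR ustar]
      calc ‖(1-α) • x + α • R x - ((1-α) • ustar + α • R ustar)‖
          = ‖(1-α) • (x - ustar) + α • (R x - R ustar)‖ := by
            congr 1; module
        _ ≤ ‖(1-α) • (x - ustar)‖ + ‖α • (R x - R ustar)‖ := norm_add_le _ _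
        _ = (1-α) * ‖x - ustar‖ + α * ‖R x - R ustar‖ := by
            rw [norm_smul, norm_smul, Real.norm_eq_abs, Real.norm_eq_abs,
              abs_of_pos hα.1, abs_of_nonneg (by linarith [hα.2] : (0:ℝ) ≤ 1 - α)]
        _ ≤ (1-α) * ‖x - ustar‖ + α * ‖x - ustar‖ :=
            add_le_add_right (mul_le_mul_of_nonneg_left (hR x ustar) hα.1.le) _
        _ = ‖x - ustar‖ := by ring
    calc ‖T x - x‖ = ‖(T x - T ustar) - (x - ustar)‖ := by rw [hust]; congr 1; abel
      _ ≤ ‖T x - T ustar‖ + ‖x - ustar‖ := norm_sub_le _ _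
      _ ≤ 2 * ‖x - ustar‖ := by linarith
  have hub : 0 < lamUp := by
    have h0 := hbounds 0 le_rfl
    linarith [hlow]
  have hbnd : ∀ᵐ r ∂(volume.restrict (Set.Ioc s t)), ‖u' r‖ ≤ lamUp * (2 * M) := by
    filter_upwards [hode', ae_restrict_mem measurableSet_Ioc] with r hr hrmem
    have hr0 : (0:ℝ) ≤ r := hs.trans hrmem.1.le
    have hlam := hbounds r hr0
    rw [hr, norm_smul, Real.norm_eq_abs, abs_of_pos (hlow.trans_le hlam.1)]
    have h1 : ‖T (u r) - u r‖ ≤ 2 * M :=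
      (hTsub (u r)).trans (by linarith [hM r ⟨hr0, hrmem.2⟩])
    have h2 : lam r * ‖T (u r) - u r‖ ≤ lamUp * ‖T (u r) - u r‖ :=
      mul_le_mul_of_nonneg_right hlam.2 (norm_nonneg _)
    nlinarith [norm_nonneg (T (u r) - u r), hub]
  -- integrability of the integrands
  have hsqm : AEStronglyMeasurable (fun r => ‖u' r‖^2) (volume.restrict (Set.Ioc s t)) := by
    refine (hi''.aestronglyMeasurable.norm.mul hi''.aestronglyMeasurable.norm).congr ?_
    exact Filter.Eventually.of_forall fun r => (sq ‖u' r‖).symm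
  have hsqi : IntegrableOn (fun r => ‖u' r‖^2) (Set.Ioc s t) := by
    refine Integrable.mono' (hi''.norm.const_mul (lamUp * (2*M))) hsqm ?_
    filter_upwards [hbnd] with r hr
    rw [Real.norm_eq_abs, abs_of_nonneg (by positivity : (0:ℝ) ≤ ‖u' r‖^2), sq]
    exact mul_le_mul_of_nonneg_right hr (norm_nonneg _)
  have hvm : AEStronglyMeasurable (fun r => u r - ustar) (volume.restrict (Set.Ioc s t)) := by
    have h1 : AEStronglyMeasurable (fun r => u r - ustar) (volume.restrict (Set.Icc 0 t)) :=
      (hucont.sub continuousOn_const).aestronglyMeasurable measurableSet_Icc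
    exact h1.mono_measure (Measure.restrict_mono (show Set.Ioc s t ⊆ Set.Icc 0 t from
      fun r hr => ⟨hs.trans hr.1.le, hr.2⟩) le_rfl)
  have hprodi : IntegrableOn (fun r => ⟪u' r, u r - ustar⟫) (Set.Ioc s t) := by
    refine Integrable.mono' (hi''.norm.mul_const M) (hi''.aestronglyMeasurable.inner hvm) ?_
    filter_upwards [ae_restrict_mem measurableSet_Ioc] with r hr
    refine (norm_inner_le_norm _ _).trans ?_
    exact mul_le_mul_of_nonneg_left (hM r ⟨hs.trans hr.1.le, hr.2⟩) (norm_nonneg _)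
  -- FTC identity
  have hftc := ftc_k hint hs hst hi ustar
  -- pointwise a.e. inequality
  have hae : ∀ᵐ r ∂(volume.restrict (Set.Ioc s t)),
      ⟪u' r, u r - ustar⟫ ≤ -((1/(2*α*lamUp)) * ‖u' r‖^2) := by
    filter_upwards [hode', ae_restrict_mem measurableSet_Ioc] with r hr hrmem
    have hr0 : (0:ℝ) ≤ r := hs.trans hrmem.1.le
    have hlam := hbounds r hr0
    have h := pw_ineq hα hR hTR hust hlow hlam.1 hlam.2 (u r)
    rw [← hr] at h
    linarith
  have hmono : (∫ r in Set.Ioc s t, ⟪u' r, u r - ustar⟫)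
      ≤ ∫ r in Set.Ioc s t, -((1/(2*α*lamUp)) * ‖u' r‖^2) :=
    integral_mono_ae hprodi ((hsqi.const_mul _).neg) hae
  have hpull : (∫ r in Set.Ioc s t, -((1/(2*α*lamUp)) * ‖u' r‖^2))
      = -((1/(2*α*lamUp)) * ∫ r in Set.Ioc s t, ‖u' r‖^2) := by
    rw [integral_neg, integral_const_mul]
  rw [hpull] at hmono
  linarith [hftc ▸ hmono]

set_option maxHeartbeats 1000000 in
/-- Energy dissipation for the dynamical system `u̇(t) = λ(t)(T(u(t)) - u(t))`, `T`
`α`-averaged with a fixed point: for every fixed point `u*`, the energy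
`k(t) = (1/2)‖u(t) - u*‖²` satisfies `k̇(t) + (1/(2αλ_up))‖u̇(t)‖² ≤ 0` a.e.;
hence `t ↦ ‖u(t) - u*‖` is nonincreasing, `u` is bounded, and `u̇ ∈ L²([0,∞); H)`. -/
theorem stmt_11 {H : Type*} [NormedAddCommGroup H] [InnerProductSpace ℝ H]
    [CompleteSpace H]
    (α : ℝ) (hα : α ∈ Set.Ioo (0 : ℝ) 1) (T : H → H)
    (hT : ∃ R : H → H, (∀ x y : H, ‖R x - R y‖ ≤ ‖x - y‖) ∧
      ∀ x : H, T x = (1 - α) • x + α • R x)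
    (hFix : ∃ p : H, T p = p)
    (lam : ℝ → ℝ) (hlam_meas : Measurable lam)
    (lamLow lamUp : ℝ) (hlow : 0 < lamLow)
    (hbounds : ∀ t : ℝ, 0 ≤ t → lamLow ≤ lam t ∧ lam t ≤ lamUp)
    (u : ℝ → H) (u' : ℝ → H) (u₀ : H) (hu0 : u 0 = u₀)
    -- `u` is locally absolutely continuous with a.e. derivative `u'`:
    (hderiv : ∀ᵐ t ∂(volume.restrict (Set.Ici (0 : ℝ))), HasDerivAt u (u' t) t)
    (hint : ∀ t : ℝ, 0 ≤ t → u t = u 0 + ∫ s in (0 : ℝ)..t, u' s)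
    -- the ODE holds almost everywhere:
    (hode : ∀ᵐ t ∂(volume.restrict (Set.Ici (0 : ℝ))), u' t = lam t • (T (u t) - u t)) :
    ∀ ustar : H, T ustar = ustar →
      ((∀ᵐ t ∂(volume.restrict (Set.Ici (0 : ℝ))),
          deriv (fun s => (1 / 2) * ‖u s - ustar‖ ^ 2) t
            + (1 / (2 * α * lamUp)) * ‖u' t‖ ^ 2 ≤ 0) ∧
        (∀ s t : ℝ, 0 ≤ s → s ≤ t → ‖u t - ustar‖ ≤ ‖u s - ustar‖) ∧
        (∃ C : ℝ, ∀ t : ℝ, 0 ≤ t → ‖u t‖ ≤ C) ∧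
        IntegrableOn (fun t => ‖u' t‖ ^ 2) (Set.Ici (0 : ℝ)) volume) := by
  intro ustar hust
  obtain ⟨R, hR, hTR⟩ := hT
  have hα0 := hα.1
  have hub : 0 < lamUp := by have h0 := hbounds 0 le_rfl; linarith
  have hc : 0 < 1/(2*α*lamUp) := by positivity
  -- Step 1: interval integrability of u' on every [0, t]
  have hAll : ∀ t : ℝ, 0 ≤ t → IntervalIntegrable u' volume 0 t := by
    by_contra hcon
    push_neg at hcon
    obtain ⟨T0, hT00, hT0n⟩ := hcon
    set N : Set ℝ := {t | 0 ≤ t ∧ ¬ IntervalIntegrable u' volume 0 t} with hN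
    have hNne : N.Nonempty := ⟨T0, hT00, hT0n⟩
    have hNbdd : BddBelow N := ⟨0, fun n hn => hn.1⟩
    set τ := sInf N with hτ
    have hτ0 : 0 ≤ τ := le_csInf hNne (fun n hn => hn.1)
    have hup' : ∀ t, τ < t → ¬ IntervalIntegrable u' volume 0 t := by
      intro t htt
      obtain ⟨n, hnN, hnt⟩ := (csInf_lt_iff hNbdd hNne).mp htt
      intro hint2
      refine hnN.2 (hint2.mono_set ?_)
      refine Set.uIcc_subset_uIcc Set.left_mem_uIcc ?_
      rw [Set.uIcc_of_le (hτ0.trans htt.le)]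
      exact ⟨hnN.1, hnt.le⟩
    have hconst : ∀ t, τ < t → u t = u 0 := by
      intro t htt
      have h0t : (0:ℝ) ≤ t := hτ0.trans htt.le
      have h1 := hint t h0t
      rw [intervalIntegral.integral_of_le h0t, integral_undef (fun hI => hup' t htt
        ((intervalIntegrable_iff_integrableOn_Ioc_of_le h0t).mpr hI))] at h1
      simpa using h1
    -- T fixes u 0
    have hfix0 : T (u 0) = u 0 := by
      have hne : (volume.restrict (Set.Ici (0:ℝ))) (Set.Ioi τ) ≠ 0 := by
        rw [Measure.restrict_apply measurableSet_Ioi]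
        have hss : Set.Ioi τ ∩ Set.Ici (0:ℝ) = Set.Ioi τ :=
          Set.inter_eq_self_of_subset_left (fun x hx => hτ0.trans (le_of_lt hx))
        rw [hss, Real.volume_Ioi]
        simp
      have hae2 : ∀ᵐ r ∂(volume.restrict (Set.Ici (0:ℝ))),
          HasDerivAt u (u' r) r ∧ u' r = lam r • (T (u r) - u r) := hderiv.and hode
      have hex : ∃ r, r ∈ Set.Ioi τ ∧
          (HasDerivAt u (u' r) r ∧ u' r = lam r • (T (u r) - u r)) := by
        by_contra hno
        push_neg at hno
        refine hne (measure_mono_null ?_ (ae_iff.mp hae2))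
        intro r hr
        show ¬(HasDerivAt u (u' r) r ∧ u' r = lam r • (T (u r) - u r))
        exact fun hP => hno r hr hP.1 hP.2
      obtain ⟨r, hrτ, hD, hO⟩ := hex
      have hloc : u =ᶠ[nhds r] (fun _ => u 0) := by
        filter_upwards [Ioi_mem_nhds hrτ] with x hx using hconst x hx
      have hD0 : HasDerivAt (fun _ : ℝ => u 0) (u' r) r :=
        hD.congr_of_eventuallyEq hloc.symm
      have hz : u' r = 0 := hD0.unique (hasDerivAt_const r (u 0))
      rw [hz, hconst r hrτ] at hO
      have hlam := hbounds r (hτ0.trans hrτ.le)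
      have hlamne : lam r ≠ 0 := (hlow.trans_le hlam.1).ne'
      have := (smul_eq_zero.mp hO.symm).resolve_left hlamne
      have h2 : T (u 0) - u 0 = 0 := this
      rw [sub_eq_zero] at h2
      exact h2
    -- u ≡ u 0 on [0, τ)
    have hlt : ∀ s, 0 ≤ s → s < τ → u s = u 0 := by
      intro s hs0 hsτ
      have hii : IntervalIntegrable u' volume 0 s := by
        by_contra hno
        exact (notMem_of_lt_csInf hsτ hNbdd) ⟨hs0, hno⟩
      have hkey := key_ineq hα hR hTR hfix0 hlow hbounds hint hode le_rfl hs0 hii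
      have hint0 : 0 ≤ ∫ r in Set.Ioc (0:ℝ) s, ‖u' r‖^2 :=
        setIntegral_nonneg measurableSet_Ioc (fun r _ => sq_nonneg _)
      have hnz : ‖u s - u 0‖^2 ≤ 0 := by
        have hzero : ‖u 0 - u 0‖ = 0 := by simp
        nlinarith [mul_nonneg hc.le hint0]
      have : ‖u s - u 0‖ = 0 := by nlinarith [norm_nonneg (u s - u 0), sq_nonneg (‖u s - u 0‖)]
      rw [norm_eq_zero, sub_eq_zero] at this
      exact this
    -- u' = 0 a.e. on Ici 0
    have huz : ∀ᵐ r ∂(volume.restrict (Set.Ici (0:ℝ))), u' r = 0 := by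
      have hnull : (volume.restrict (Set.Ici (0:ℝ))) ({0, τ} : Set ℝ) = 0 := by
        rw [Measure.restrict_apply (((Set.finite_singleton τ).insert 0).measurableSet)]
        exact measure_mono_null Set.inter_subset_left
          (((Set.finite_singleton τ).insert 0).measure_zero volume)
      have hcompl : ∀ᵐ r ∂(volume.restrict (Set.Ici (0:ℝ))), r ∉ ({0, τ} : Set ℝ) := by
        rw [ae_iff]
        refine measure_mono_null (fun x hx => ?_) hnull
        exact not_not.mp hx
      filter_upwards [hderiv, ae_restrict_mem measurableSet_Ici, hcompl] with r hD hr0 hrn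
      have hr0' : 0 < r := by
        rcases lt_or_eq_of_le (Set.mem_Ici.mp hr0) with h | h
        · exact h
        · exact absurd (by simp [← h] : r ∈ ({0, τ} : Set ℝ)) hrn
      have hrτ : r ≠ τ := fun h => hrn (by simp [h])
      have hropen : {x : ℝ | 0 < x ∧ x ≠ τ} ∈ nhds r := by
        have ho : IsOpen {x : ℝ | 0 < x ∧ x ≠ τ} :=
          (isOpen_lt continuous_const continuous_id).inter isOpen_ne
        exact ho.mem_nhds ⟨hr0', hrτ⟩
      have hloc : u =ᶠ[nhds r] (fun _ => u 0) := by
        filter_upwards [hropen] with x hx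
        rcases lt_or_ge x τ with h | h
        · exact hlt x hx.1.le h
        · exact hconst x (lt_of_le_of_ne h (Ne.symm hx.2))
      have hD0 : HasDerivAt (fun _ : ℝ => u 0) (u' r) r :=
        hD.congr_of_eventuallyEq hloc.symm
      exact hD0.unique (hasDerivAt_const r (u 0))
    refine hT0n ?_
    rw [intervalIntegrable_iff_integrableOn_Ioc_of_le hT00]
    have hz2 : ∀ᵐ r ∂(volume.restrict (Set.Ioc (0:ℝ) T0)), u' r = 0 :=
      ae_restrict_of_ae_restrict_of_subset (fun r hr => hr.1.le) huz
    exact (integrable_zero _ _ _).congr (Filter.EventuallyEq.symm hz2)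
  -- Step 2: monotonicity
  have hmono : ∀ s t : ℝ, 0 ≤ s → s ≤ t → ‖u t - ustar‖ ≤ ‖u s - ustar‖ := by
    intro s t hs hst
    have hkey := key_ineq hα hR hTR hust hlow hbounds hint hode hs hst
      (hAll t (hs.trans hst))
    have hint0 : 0 ≤ ∫ r in Set.Ioc s t, ‖u' r‖^2 :=
      setIntegral_nonneg measurableSet_Ioc (fun r _ => sq_nonneg _)
    nlinarith [mul_nonneg hc.le hint0, norm_nonneg (u t - ustar), norm_nonneg (u s - ustar)]
  refine ⟨?_, hmono, ?_, ?_⟩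
  -- Part 1: a.e. differential inequality
  · filter_upwards [hderiv, hode, ae_restrict_mem measurableSet_Ici] with t hD hO ht0
    have hw : HasDerivAt (fun s => u s - ustar) (u' t) t := hD.sub_const ustar
    have h2 : HasDerivAt (fun s => ⟪u s - ustar, u s - ustar⟫)
        (⟪u t - ustar, u' t⟫ + ⟪u' t, u t - ustar⟫) t := HasDerivAt.inner ℝ hw hw
    have h3 := h2.const_mul (1/2 : ℝ)
    have hk : HasDerivAt (fun s => (1/2 : ℝ) * ‖u s - ustar‖^2) ⟪u' t, u t - ustar⟫ t := by
      have hfun : (fun s => (1/2 : ℝ) * ‖u s - ustar‖^2)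
          = fun s => (1/2 : ℝ) * ⟪u s - ustar, u s - ustar⟫ := by
        funext s; rw [real_inner_self_eq_norm_sq]
      rw [hfun]
      refine h3.congr_deriv ?_
      rw [real_inner_comm (u' t) (u t - ustar)]
      ring
    rw [hk.deriv]
    have hpw := pw_ineq hα hR hTR hust hlow (hbounds t ht0).1 (hbounds t ht0).2 (u t)
    rw [← hO] at hpw
    linarith
  -- Part 3: boundedness
  · refine ⟨‖u₀ - ustar‖ + ‖ustar‖, fun t ht => ?_⟩
    calc ‖u t‖ = ‖(u t - ustar) + ustar‖ := by rw [sub_add_cancel]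
      _ ≤ ‖u t - ustar‖ + ‖ustar‖ := norm_add_le _ _
      _ ≤ ‖u₀ - ustar‖ + ‖ustar‖ := by
          have := hmono 0 t le_rfl ht
          rw [hu0] at this
          linarith
  -- Part 4: L² integrability
  · set g : ℝ → ℝ := fun t => ‖u' t‖^2 with hg
    set B : ℝ := ((1/2)*‖u 0 - ustar‖^2) / (1/(2*α*lamUp)) with hB
    set Mg : ℝ := lamUp * (2 * ‖u 0 - ustar‖) with hMg
    have hMg0 : 0 ≤ Mg := by positivity
    have hTsub : ∀ x : H, ‖T x - x‖ ≤ 2 * ‖x - ustar‖ := by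
      intro x
      have h1 : ‖T x - T ustar‖ ≤ ‖x - ustar‖ := by
        rw [hTR x, hTR ustar]
        calc ‖(1-α) • x + α • R x - ((1-α) • ustar + α • R ustar)‖
            = ‖(1-α) • (x - ustar) + α • (R x - R ustar)‖ := by congr 1; module
          _ ≤ ‖(1-α) • (x - ustar)‖ + ‖α • (R x - R ustar)‖ := norm_add_le _ _
          _ = (1-α) * ‖x - ustar‖ + α * ‖R x - R ustar‖ := by
              rw [norm_smul, norm_smul, Real.norm_eq_abs, Real.norm_eq_abs,
                abs_of_pos hα0, abs_of_nonneg (by linarith [hα.2] : (0:ℝ) ≤ 1 - α)]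
          _ ≤ (1-α) * ‖x - ustar‖ + α * ‖x - ustar‖ :=
              add_le_add_right (mul_le_mul_of_nonneg_left (hR x ustar) hα0.le) _
          _ = ‖x - ustar‖ := by ring
      calc ‖T x - x‖ = ‖(T x - T ustar) - (x - ustar)‖ := by rw [hust]; congr 1; abel
        _ ≤ ‖T x - T ustar‖ + ‖x - ustar‖ := norm_sub_le _ _
        _ ≤ 2 * ‖x - ustar‖ := by linarith
    have hglob : ∀ᵐ r ∂(volume.restrict (Set.Ici (0:ℝ))), ‖u' r‖ ≤ Mg := by
      filter_upwards [hode, ae_restrict_mem measurableSet_Ici] with r hO hr0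
      rw [hO, norm_smul, Real.norm_eq_abs, abs_of_pos (hlow.trans_le (hbounds r hr0).1)]
      have h1 : ‖T (u r) - u r‖ ≤ 2 * ‖u r - ustar‖ := hTsub (u r)
      have h2 : ‖u r - ustar‖ ≤ ‖u 0 - ustar‖ := hmono 0 r le_rfl hr0
      have h3 : lam r * ‖T (u r) - u r‖ ≤ lamUp * ‖T (u r) - u r‖ :=
        mul_le_mul_of_nonneg_right (hbounds r hr0).2 (norm_nonneg _)
      have h4 : lamUp * ‖T (u r) - u r‖ ≤ lamUp * (2 * ‖u 0 - ustar‖) :=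
        mul_le_mul_of_nonneg_left (by linarith) hub.le
      rw [hMg]; linarith
    have hfi : ∀ i : ℝ, IntegrableOn g (Set.Ioc 0 i) := by
      intro i
      rcases le_or_gt i 0 with h | h
      · rw [Set.Ioc_eq_empty h.not_gt]
        exact integrableOn_empty
      · have hi' : IntegrableOn u' (Set.Ioc 0 i) :=
          (intervalIntegrable_iff_integrableOn_Ioc_of_le h.le).mp (hAll i h.le)
        have hgm : AEStronglyMeasurable g (volume.restrict (Set.Ioc 0 i)) := by
          refine (hi'.aestronglyMeasurable.norm.mul hi'.aestronglyMeasurable.norm).congr ?_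
          exact Filter.Eventually.of_forall fun r => (sq ‖u' r‖).symm
        have hgb : ∀ᵐ r ∂(volume.restrict (Set.Ioc (0:ℝ) i)), ‖g r‖ ≤ Mg^2 := by
          have hglob' : ∀ᵐ r ∂(volume.restrict (Set.Ioc (0:ℝ) i)), ‖u' r‖ ≤ Mg :=
            ae_restrict_of_ae_restrict_of_subset (fun r hr => hr.1.le) hglob
          filter_upwards [hglob'] with r hr
          rw [hg, Real.norm_eq_abs, abs_of_nonneg (sq_nonneg _)]
          exact pow_le_pow_left₀ (norm_nonneg _) hr 2
        exact Integrable.mono' (integrableOn_const measure_Ioc_lt_top.ne)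
          hgm hgb
    have hbd : ∀ᶠ i in Filter.atTop, (∫ x in (0:ℝ)..i, ‖g x‖) ≤ B := by
      filter_upwards [Filter.eventually_ge_atTop (0:ℝ)] with i hi0
      have hkey := key_ineq hα hR hTR hust hlow hbounds hint hode le_rfl hi0 (hAll i hi0)
      have h1 : (∫ x in (0:ℝ)..i, ‖g x‖) = ∫ r in Set.Ioc 0 i, g r := by
        rw [intervalIntegral.integral_of_le hi0]
        refine integral_congr_ae (Filter.Eventually.of_forall fun r => ?_)
        simp only [hg, Real.norm_eq_abs]
        exact abs_of_nonneg (sq_nonneg _)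
      rw [h1, hB]
      rw [le_div_iff₀ hc]
      nlinarith [sq_nonneg ‖u i - ustar‖,
        mul_comm (∫ r in Set.Ioc (0:ℝ) i, g r) (1/(2*α*lamUp))]
    have hIoi : IntegrableOn g (Set.Ioi (0:ℝ)) :=
      integrableOn_Ioi_of_intervalIntegral_norm_bounded B 0 hfi
        (Filter.tendsto_id (α := ℝ)) hbd
    rw [integrableOn_Ici_iff_integrableOn_Ioi]
    exact hIoi
end

section
/- Let T : H → H be an α-averaged operator (α ∈ (0,1)) with Fix(T) ≠ ∅ and let u : [0,∞) → H be the strong global solution of u̇(t) = λ(t)(T(u(t)) - u(t)), u(0) = u₀, where λ is Lebesgue measurable with 0 < λ_low ≤ λ(t) ≤ λ_up. Then u(t) converges weakly as t → ∞ to some point ū ∈ Fix(T). -/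
open MeasureTheory Filter

local notation "⟪" x ", " y "⟫" => @inner ℝ _ _ x y

section Helpers

variable {H : Type*} [NormedAddCommGroup H] [InnerProductSpace ℝ H]

lemma three_point (a b c : H) :
    2 * ⟪a - b, b - c⟫ = ‖a - c‖ ^ 2 - ‖a - b‖ ^ 2 - ‖b - c‖ ^ 2 := by
  have h : ‖(a - b) + (b - c)‖ ^ 2 = ‖a - b‖ ^ 2 + 2 * ⟪a - b, b - c⟫ + ‖b - c‖ ^ 2 := by
    rw [← norm_add_sq_real]
  have h2 : (a - b) + (b - c) = a - c := by abel
  rw [h2] at h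
  linarith

lemma fix_R {α : ℝ} (hα0 : 0 < α) (R : H → H)
    (T : H → H) (hTR : ∀ x : H, T x = (1 - α) • x + α • R x)
    {q : H} (hq : T q = q) : R q = q := by
  have h := hTR q
  rw [hq] at h
  have h1 : α • R q = α • q := by
    calc α • R q = ((1 - α) • q + α • R q) - (1 - α) • q := by abel
      _ = q - (1 - α) • q := by rw [← h]
      _ = α • q := by rw [sub_smul, one_smul]; abel
  exact smul_right_injective H hα0.ne' h1

lemma key_ineq_s12 {α : ℝ} (hα0 : 0 < α) (R : H → H)
    (hR : ∀ x y : H, ‖R x - R y‖ ≤ ‖x - y‖)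
    (T : H → H) (hTR : ∀ x : H, T x = (1 - α) • x + α • R x)
    {q : H} (hq : T q = q) (x : H) :
    2 * ⟪T x - x, x - q⟫ ≤ -(1 / α) * ‖T x - x‖ ^ 2 := by
  have hRq : R q = q := fix_R hα0 R T hTR hq
  have hTx : T x - x = α • (R x - x) := by
    rw [hTR x, sub_smul, one_smul, smul_sub]
    abel
  have h3 := three_point (R x) x q
  have hle : ‖R x - q‖ ≤ ‖x - q‖ := by
    have := hR x q
    rwa [hRq] at this
  have hsq : ‖R x - q‖ ^ 2 ≤ ‖x - q‖ ^ 2 :=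
    pow_le_pow_left₀ (norm_nonneg _) hle 2
  have hkey : 2 * ⟪R x - x, x - q⟫ ≤ -‖R x - x‖ ^ 2 := by linarith
  have hinner : ⟪T x - x, x - q⟫ = α * ⟪R x - x, x - q⟫ := by
    rw [hTx, real_inner_smul_left]
  have hnorm : ‖T x - x‖ ^ 2 = α ^ 2 * ‖R x - x‖ ^ 2 := by
    rw [hTx, norm_smul, Real.norm_eq_abs, abs_of_pos hα0, mul_pow]
  rw [hinner, hnorm]
  have : -(1 / α) * (α ^ 2 * ‖R x - x‖ ^ 2) = α * (-‖R x - x‖ ^ 2) := by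
    field_simp
  rw [this]
  calc 2 * (α * ⟪R x - x, x - q⟫) = α * (2 * ⟪R x - x, x - q⟫) := by ring
    _ ≤ α * (-‖R x - x‖ ^ 2) := by
        exact mul_le_mul_of_nonneg_left hkey hα0.le

end Helpers

section FTC

variable {H : Type*} [NormedAddCommGroup H] [InnerProductSpace ℝ H] [CompleteSpace H]




lemma ftc_sq {g : ℝ → H} {a b : ℝ} (hab : a ≤ b)
    (hg : IntegrableOn g (Set.Ioc a b)) (v : ℝ → H) (p : H)
    (hv : ∀ t ∈ Set.Icc a b, v t = v a + ∫ s in Set.Ioc a t, g s) :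
    ‖v b - p‖ ^ 2 = ‖v a - p‖ ^ 2 + ∫ r in Set.Ioc a b, 2 * ⟪g r, v r - p⟫ := by
  set c := v a - p with hc
  set w : ℝ → H := fun r => ∫ s in Set.Ioc a r, g s with hw
  set I : H := ∫ s in Set.Ioc a b, g s with hI
  have hIcc : IntegrableOn g (Set.Icc a b) := (integrableOn_Icc_iff_integrableOn_Ioc).2 hg
  have hwcont : ContinuousOn w (Set.Icc a b) := intervalIntegral.continuousOn_primitive hIcc
  have hwm : AEStronglyMeasurable w (volume.restrict (Set.Ioc a b)) :=
    (hwcont.mono Set.Ioc_subset_Icc_self).aestronglyMeasurable measurableSet_Ioc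
  set C : ℝ := ∫ s in Set.Ioc a b, ‖g s‖ with hC
  have hwbd : ∀ r ∈ Set.Ioc a b, ‖w r‖ ≤ C := by
    intro r hr
    calc ‖w r‖ ≤ ∫ s in Set.Ioc a r, ‖g s‖ := norm_integral_le_integral_norm _
      _ ≤ C := by
          apply setIntegral_mono_set hg.norm
          · exact ae_of_all _ fun s => norm_nonneg _
          · exact HasSubset.Subset.eventuallyLE (Set.Ioc_subset_Ioc le_rfl hr.2)
  have hvr : ∀ r ∈ Set.Ioc a b, v r - p = c + w r := by
    intro r hr
    rw [hv r (Set.Ioc_subset_Icc_self hr), hc]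
    abel
  have integrable1 : ∀ y : H, IntegrableOn (fun r => ⟪g r, y⟫) (Set.Ioc a b) := by
    intro y
    refine Integrable.mono' (hg.norm.mul_const ‖y‖)
      (hg.aestronglyMeasurable.inner aestronglyMeasurable_const) ?_
    exact ae_of_all _ fun r => norm_inner_le_norm _ _
  have const_inner_eq : ∀ y : H, (∫ r in Set.Ioc a b, ⟪g r, y⟫) = ⟪y, I⟫ := by
    intro y
    have h7 : (fun r => ⟪g r, y⟫) = fun r => ⟪y, g r⟫ := funext fun r => real_inner_comm _ _
    rw [h7, integral_inner hg y, hI]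
  have integrable2 : IntegrableOn (fun r => ⟪g r, w r⟫) (Set.Ioc a b) := by
    refine Integrable.mono' (hg.norm.mul_const C)
      (hg.aestronglyMeasurable.inner hwm) ?_
    filter_upwards [ae_restrict_mem measurableSet_Ioc] with r hr
    exact (norm_inner_le_norm _ _).trans
      (mul_le_mul_of_nonneg_left (hwbd r hr) (norm_nonneg _))
  -- the Fubini symmetrization
  set ν := volume.restrict (Set.Ioc a b) with hν
  haveI : IsFiniteMeasure ν := ⟨by rw [Measure.restrict_apply_univ]; exact measure_Ioc_lt_top⟩
  have hF : Integrable (fun z : ℝ × ℝ => ⟪g z.1, g z.2⟫) (ν.prod ν) := by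
    refine Integrable.mono' (hg.norm.mul_prod hg.norm)
      (hg.aestronglyMeasurable.comp_fst.inner hg.aestronglyMeasurable.comp_snd) ?_
    exact ae_of_all _ fun z => norm_inner_le_norm _ _
  set k : ℝ → ℝ → ℝ := fun r s => Set.indicator (Set.Ioi r) (fun s => ⟪g r, g s⟫) s with hk
  have hk_int : Integrable (Function.uncurry k) (ν.prod ν) := by
    have : Function.uncurry k =
        Set.indicator {z : ℝ × ℝ | z.1 < z.2} (fun z => ⟪g z.1, g z.2⟫) := by
      ext z
      simp only [Function.uncurry, hk, Set.indicator_apply, Set.mem_Ioi, Set.mem_setOf_eq]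
    rw [this]
    exact hF.indicator (measurableSet_lt measurable_fst measurable_snd)
  have swap : (∫ r, ∫ s, k r s ∂ν ∂ν) = ∫ s, ∫ r, k r s ∂ν ∂ν :=
    integral_integral_swap hk_int
  have lhs_eq : (∫ r, ∫ s, k r s ∂ν ∂ν)
      = ∫ r in Set.Ioc a b, ⟪g r, ∫ s in Set.Ioc r b, g s⟫ := by
    apply setIntegral_congr_fun measurableSet_Ioc
    intro r hr
    dsimp only
    have h1 : (∫ s, k r s ∂ν) = ∫ s in Set.Ioc a b ∩ Set.Ioi r, ⟪g r, g s⟫ := by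
      rw [hν]
      exact setIntegral_indicator measurableSet_Ioi
    have h2 : Set.Ioc a b ∩ Set.Ioi r = Set.Ioc r b := by
      rw [Set.Ioc_inter_Ioi, sup_eq_right.2 hr.1.le]
    rw [h1, h2]
    exact integral_inner (hg.mono_set (Set.Ioc_subset_Ioc_left hr.1.le)) (g r)
  have rhs_eq : (∫ s, ∫ r, k r s ∂ν ∂ν) = ∫ s in Set.Ioc a b, ⟪g s, w s⟫ := by
    apply setIntegral_congr_fun measurableSet_Ioc
    intro s hs
    dsimp only
    have h1 : ∀ r, k r s = Set.indicator (Set.Iio s) (fun r => ⟪g r, g s⟫) r := by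
      intro r
      simp only [hk, Set.indicator_apply, Set.mem_Ioi, Set.mem_Iio]
    have h2 : (∫ r, k r s ∂ν) = ∫ r in Set.Ioc a b ∩ Set.Iio s, ⟪g r, g s⟫ := by
      simp_rw [h1]
      rw [hν]
      exact setIntegral_indicator measurableSet_Iio
    have h3 : Set.Ioc a b ∩ Set.Iio s = Set.Ioo a s := by
      ext r
      constructor
      · rintro ⟨⟨h4, _⟩, h5⟩; exact ⟨h4, h5⟩
      · rintro ⟨h4, h5⟩; exact ⟨⟨h4, le_trans h5.le hs.2⟩, h5⟩
    rw [h2, h3, ← integral_Ioc_eq_integral_Ioo]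
    have h4 : (∫ r in Set.Ioc a s, ⟪g r, g s⟫) = ∫ r in Set.Ioc a s, ⟪g s, g r⟫ := by
      simp_rw [real_inner_comm]
    rw [h4]
    exact integral_inner (hg.mono_set (Set.Ioc_subset_Ioc_right hs.2)) (g s)
  have fubini : (∫ r in Set.Ioc a b, ⟪g r, ∫ s in Set.Ioc r b, g s⟫)
      = ∫ r in Set.Ioc a b, ⟪g r, w r⟫ := by
    rw [← lhs_eq, swap, rhs_eq]
  -- pointwise split identity
  have hmeq : ∀ r ∈ Set.Ioc a b, ⟪g r, ∫ s in Set.Ioc r b, g s⟫ = ⟪g r, I⟫ - ⟪g r, w r⟫ := by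
    intro r hr
    have hunion : w r + (∫ s in Set.Ioc r b, g s) = I := by
      rw [hw, hI]
      rw [← setIntegral_union (Set.Ioc_disjoint_Ioc_of_le le_rfl) measurableSet_Ioc
        (hg.mono_set (Set.Ioc_subset_Ioc_right hr.2))
        (hg.mono_set (Set.Ioc_subset_Ioc_left hr.1.le)),
        Set.Ioc_union_Ioc_eq_Ioc hr.1.le hr.2]
    have h5 : (∫ s in Set.Ioc r b, g s) = I - w r := by rw [← hunion]; abel
    rw [h5, inner_sub_right]
  have integrable3 : IntegrableOn (fun r => ⟪g r, ∫ s in Set.Ioc r b, g s⟫) (Set.Ioc a b) := by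
    apply ((integrable1 I).sub integrable2).congr
    filter_upwards [ae_restrict_mem measurableSet_Ioc] with r hr
    exact (hmeq r hr).symm
  have hIeq : (∫ r in Set.Ioc a b, ⟪g r, I⟫) = ‖I‖ ^ 2 := by
    rw [const_inner_eq I, real_inner_self_eq_norm_sq]
  have hdouble : (∫ r in Set.Ioc a b, ⟪g r, w r⟫)
      + (∫ r in Set.Ioc a b, ⟪g r, ∫ s in Set.Ioc r b, g s⟫) = ‖I‖ ^ 2 := by
    rw [← integral_add integrable2 integrable3, ← hIeq]
    apply setIntegral_congr_fun measurableSet_Ioc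
    intro r hr
    dsimp only
    have := hmeq r hr
    linarith
  have hJ : (∫ r in Set.Ioc a b, ⟪g r, w r⟫) = ‖I‖ ^ 2 / 2 := by
    have := hdouble
    rw [← fubini] at this
    linarith
  -- assemble
  have hsum : (∫ r in Set.Ioc a b, 2 * ⟪g r, v r - p⟫) = 2 * ⟪c, I⟫ + ‖I‖ ^ 2 := by
    have hsplit : (∫ r in Set.Ioc a b, 2 * ⟪g r, v r - p⟫)
        = ∫ r in Set.Ioc a b, (2 * ⟪g r, c⟫ + 2 * ⟪g r, w r⟫) := by
      apply setIntegral_congr_fun measurableSet_Ioc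
      intro r hr
      dsimp only
      rw [hvr r hr, inner_add_right]
      ring
    rw [hsplit, integral_add ((integrable1 c).const_mul 2) (integrable2.const_mul 2)]
    rw [integral_const_mul, integral_const_mul, const_inner_eq c, hJ]
    ring
  have hb : v b - p = c + I := by
    rw [hv b ⟨hab, le_rfl⟩, hc, hI]
    abel
  rw [hb, hsum, norm_add_sq_real]
  rw [hc]
  ring

end FTC


lemma tendsto_of_antitone_on (f : ℝ → ℝ) (hmono : ∀ s t : ℝ, 0 ≤ s → s ≤ t → f t ≤ f s)
    (hpos : ∀ t : ℝ, 0 ≤ t → 0 ≤ f t) : ∃ l, Tendsto f atTop (nhds l) := by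
  set F := fun t : ℝ => f (max t 0) with hF
  have hFanti : Antitone F := fun s t hst =>
    hmono (max s 0) (max t 0) (le_max_right _ _) (max_le_max hst le_rfl)
  have hFbdd : BddBelow (Set.range F) := by
    refine ⟨0, ?_⟩
    rintro x ⟨t, rfl⟩
    exact hpos _ (le_max_right _ _)
  refine ⟨_, (tendsto_atTop_ciInf hFanti hFbdd).congr' ?_⟩
  filter_upwards [eventually_ge_atTop (0 : ℝ)] with t ht
  simp [hF, max_eq_left ht]

lemma ultra_tendsto_of_bounded (U : Ultrafilter ℝ) (f : ℝ → ℝ) (c : ℝ)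
    (hb : ∀ᶠ t in (U : Filter ℝ), f t ∈ Set.Icc (-c) c) :
    ∃ l, Tendsto f U (nhds l) := by
  have h1 : (Ultrafilter.map f U : Filter ℝ) ≤ Filter.principal (Set.Icc (-c) c) := by
    rw [le_principal_iff]
    exact hb
  obtain ⟨l, _, hl⟩ := isCompact_Icc.ultrafilter_le_nhds (U.map f) h1
  exact ⟨l, hl⟩

lemma barbalat {h : ℝ → ℝ} {M C : ℝ} (hM : 0 < M)
    (hnn : ∀ t : ℝ, 0 ≤ t → 0 ≤ h t)
    (hlip : ∀ s t : ℝ, 0 ≤ s → s ≤ t → |h t - h s| ≤ M * (t - s))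
    (hint : ∀ s t : ℝ, 0 ≤ s → IntegrableOn h (Set.Ioc s t))
    (hbd : ∀ t : ℝ, 0 ≤ t → (∫ r in Set.Ioc 0 t, h r) ≤ C) :
    Tendsto h atTop (nhds 0) := by
  rw [Metric.tendsto_atTop]
  intro ε hε
  by_contra hcon
  push_neg at hcon
  set δ := ε / (2 * M) with hδ
  have hδpos : 0 < δ := by positivity
  have hMδ : M * δ = ε / 2 := by
    rw [hδ]; field_simp
  have key : ∀ t₀ : ℝ, 0 ≤ t₀ → ε ≤ h t₀ →
      ε / 2 * δ ≤ ∫ r in Set.Ioc t₀ (t₀ + δ), h r := by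
    intro t₀ h0 hε0
    have hlow : ∀ r ∈ Set.Ioc t₀ (t₀ + δ), ε / 2 ≤ h r := by
      intro r hr
      have h1 := hlip t₀ r h0 hr.1.le
      have h2 : h t₀ - h r ≤ M * (r - t₀) := by
        have := abs_le.mp h1
        linarith [this.1]
      have h3 : M * (r - t₀) ≤ M * δ := by
        apply mul_le_mul_of_nonneg_left _ hM.le
        linarith [hr.2]
      linarith [hMδ]
    have h4 : (∫ _r in Set.Ioc t₀ (t₀ + δ), (ε / 2)) ≤ ∫ r in Set.Ioc t₀ (t₀ + δ), h r := by
      apply setIntegral_mono_on _ (hint t₀ (t₀ + δ) h0) measurableSet_Ioc hlow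
      exact integrableOn_const measure_Ioc_lt_top.ne
    have h5 : (∫ _r in Set.Ioc t₀ (t₀ + δ), (ε / 2)) = ε / 2 * δ := by
      rw [setIntegral_const, Real.volume_real_Ioc, smul_eq_mul]
      rw [show t₀ + δ - t₀ = δ by ring, max_eq_left hδpos.le]
      ring
    linarith
  have hfreq : ∀ N : ℝ, ∃ t, N ≤ t ∧ 0 ≤ t ∧ ε ≤ h t := by
    intro N
    obtain ⟨t, ht1, ht2⟩ := hcon (max N 0)
    refine ⟨t, le_trans (le_max_left _ _) ht1, le_trans (le_max_right _ _) ht1, ?_⟩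
    rw [Real.dist_0_eq_abs, abs_of_nonneg (hnn t (le_trans (le_max_right _ _) ht1))] at ht2
    exact ht2
  choose next hnext1 hnext2 hnext3 using hfreq
  set φ : ℕ → ℝ := fun n => Nat.rec (next 0) (fun _ prev => next (prev + δ)) n with hφ
  have hstep : ∀ n, φ (n + 1) = next (φ n + δ) := fun n => rfl
  have hφ0 : ∀ n, 0 ≤ φ n := by
    intro n
    cases n with
    | zero => exact hnext2 0
    | succ m => rw [hstep m]; exact hnext2 _
  have hφε : ∀ n, ε ≤ h (φ n) := by
    intro n
    cases n with
    | zero => exact hnext3 0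
    | succ m => rw [hstep m]; exact hnext3 _
  have hφgap : ∀ n, φ n + δ ≤ φ (n + 1) := fun n => hnext1 _
  have hnn_ae : ∀ X : ℝ, 0 ≤ᵐ[volume.restrict (Set.Ioc (0:ℝ) X)] h := by
    intro X
    filter_upwards [ae_restrict_mem measurableSet_Ioc] with r hr
    exact hnn r hr.1.le
  have main : ∀ n : ℕ, ((n : ℝ) + 1) * (ε / 2 * δ) ≤ ∫ r in Set.Ioc 0 (φ n + δ), h r := by
    intro n
    induction n with
    | zero =>
      simp only [Nat.cast_zero, zero_add, one_mul]
      calc ε / 2 * δ ≤ ∫ r in Set.Ioc (φ 0) (φ 0 + δ), h r := key _ (hφ0 0) (hφε 0)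
        _ ≤ ∫ r in Set.Ioc 0 (φ 0 + δ), h r := by
            apply setIntegral_mono_set (hint 0 _ le_rfl) (hnn_ae _)
            exact HasSubset.Subset.eventuallyLE
              (Set.Ioc_subset_Ioc_left (hφ0 0))
    | succ m ih =>
      have hsplit : (∫ r in Set.Ioc 0 (φ (m + 1) + δ), h r)
          = (∫ r in Set.Ioc 0 (φ m + δ), h r)
            + ∫ r in Set.Ioc (φ m + δ) (φ (m + 1) + δ), h r := by
        rw [← setIntegral_union (Set.Ioc_disjoint_Ioc_of_le le_rfl) measurableSet_Ioc
          (hint 0 _ le_rfl) (hint _ _ (add_nonneg (hφ0 m) hδpos.le)),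
          Set.Ioc_union_Ioc_eq_Ioc (add_nonneg (hφ0 m) hδpos.le) (by linarith [hφgap m])]
      have hlast : ε / 2 * δ ≤ ∫ r in Set.Ioc (φ m + δ) (φ (m + 1) + δ), h r := by
        calc ε / 2 * δ ≤ ∫ r in Set.Ioc (φ (m + 1)) (φ (m + 1) + δ), h r :=
              key _ (hφ0 (m+1)) (hφε (m+1))
          _ ≤ ∫ r in Set.Ioc (φ m + δ) (φ (m + 1) + δ), h r := by
              apply setIntegral_mono_set (hint _ _ (add_nonneg (hφ0 m) hδpos.le)) ?_
                (HasSubset.Subset.eventuallyLE (Set.Ioc_subset_Ioc_left (hφgap m)))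
              filter_upwards [ae_restrict_mem measurableSet_Ioc] with r hr
              have : 0 < r := lt_of_le_of_lt (add_nonneg (hφ0 m) hδpos.le) hr.1
              exact hnn r this.le
      push_cast
      rw [hsplit]
      push_cast at ih
      linarith
  obtain ⟨n, hn⟩ := exists_nat_gt (C / (ε / 2 * δ))
  have hpos : 0 < ε / 2 * δ := by positivity
  have h6 : C < (n : ℝ) * (ε / 2 * δ) := by
    rw [div_lt_iff₀ hpos] at hn
    exact hn
  have h7 := main n
  have h8 := hbd (φ n + δ) (add_nonneg (hφ0 n) hδpos.le)
  nlinarith [hpos]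

set_option maxHeartbeats 2000000 in
/-- Weak convergence of the trajectory of `u̇(t) = λ(t)(T(u(t)) - u(t))` for an
`α`-averaged operator `T` with `Fix(T) ≠ ∅`: `u(t) ⇀ ū ∈ Fix(T)` as `t → ∞`. -/
theorem stmt_12 {H : Type*} [NormedAddCommGroup H] [InnerProductSpace ℝ H]
    [CompleteSpace H]
    (α : ℝ) (hα : α ∈ Set.Ioo (0 : ℝ) 1) (T : H → H)
    (hT : ∃ R : H → H, (∀ x y : H, ‖R x - R y‖ ≤ ‖x - y‖) ∧
      ∀ x : H, T x = (1 - α) • x + α • R x)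
    (hFix : ∃ p : H, T p = p)
    (lam : ℝ → ℝ) (hlam_meas : Measurable lam)
    (lamLow lamUp : ℝ) (hlow : 0 < lamLow)
    (hbounds : ∀ t : ℝ, 0 ≤ t → lamLow ≤ lam t ∧ lam t ≤ lamUp)
    (u : ℝ → H) (u' : ℝ → H) (u₀ : H) (hu0 : u 0 = u₀)
    (hderiv : ∀ᵐ t ∂(volume.restrict (Set.Ici (0 : ℝ))), HasDerivAt u (u' t) t)
    (hint : ∀ t : ℝ, 0 ≤ t → u t = u 0 + ∫ s in (0 : ℝ)..t, u' s)
    (hode : ∀ᵐ t ∂(volume.restrict (Set.Ici (0 : ℝ))), u' t = lam t • (T (u t) - u t)) :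
    ∃ ubar : H, T ubar = ubar ∧
      ∀ h : H, Tendsto (fun t : ℝ => ⟪u t, h⟫) atTop (nhds ⟪ubar, h⟫) := by
  obtain ⟨R, hR, hTR⟩ := hT
  obtain ⟨p, hp⟩ := hFix
  obtain ⟨hα0, hα1⟩ := hα
  have hα0' : (0:ℝ) < 1 / α := by positivity
  -- T is nonexpansive
  have hTnon : ∀ x y : H, ‖T x - T y‖ ≤ ‖x - y‖ := by
    intro x y
    rw [hTR x, hTR y]
    have hsplit : (1 - α) • x + α • R x - ((1 - α) • y + α • R y)
        = (1 - α) • (x - y) + α • (R x - R y) := by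
      rw [smul_sub, smul_sub]; abel
    rw [hsplit]
    calc ‖(1 - α) • (x - y) + α • (R x - R y)‖
        ≤ ‖(1 - α) • (x - y)‖ + ‖α • (R x - R y)‖ := norm_add_le _ _
      _ = (1 - α) * ‖x - y‖ + α * ‖R x - R y‖ := by
          rw [norm_smul, norm_smul, Real.norm_eq_abs, Real.norm_eq_abs,
            abs_of_pos (by linarith), abs_of_pos hα0]
      _ ≤ (1 - α) * ‖x - y‖ + α * ‖x - y‖ := by
          have := hR x y
          nlinarith
      _ = ‖x - y‖ := by ring
  have hTcont : Continuous T := by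
    have hRcont : Continuous R := by
      have hL : LipschitzWith 1 R := by
        apply LipschitzWith.of_dist_le_mul
        intro x y
        rw [dist_eq_norm, dist_eq_norm]
        simpa using hR x y
      exact hL.continuous
    have : T = fun x => (1 - α) • x + α • R x := funext hTR
    rw [this]
    exact ((continuous_id.const_smul _).add (hRcont.const_smul _))
  have hlamUp_pos : 0 < lamUp :=
    lt_of_lt_of_le hlow (le_trans (hbounds 0 le_rfl).1 (hbounds 0 le_rfl).2)
  have hintIoc : ∀ t : ℝ, 0 ≤ t → u t = u 0 + ∫ s in Set.Ioc 0 t, u' s := by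
    intro t ht
    rw [hint t ht, intervalIntegral.integral_of_le ht]
  have hjunk : ∀ t : ℝ, 0 ≤ t → ¬ IntegrableOn u' (Set.Ioc 0 t) → u t = u 0 := by
    intro t ht hni
    rw [hintIoc t ht, integral_undef hni, add_zero]
  have key2 : ∀ q : H, T q = q → ∀ x : H, 2 * ⟪T x - x, x - q⟫ ≤ -(1/α) * ‖T x - x‖^2 :=
    fun q hq x => key_ineq_s12 hα0 R hR T hTR hq x
  have keyneg : ∀ q : H, T q = q → ∀ x : H, ⟪T x - x, x - q⟫ ≤ 0 := by
    intro q hq x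
    have h1 := key2 q hq x
    nlinarith [sq_nonneg ‖T x - x‖]
  -- the integrand is a.e. nonpositive on any sub-interval of [0, ∞)
  have hode_neg : ∀ q : H, T q = q → ∀ s t : ℝ, 0 ≤ s →
      (∫ r in Set.Ioc s t, 2 * ⟪u' r, u r - q⟫) ≤ 0 := by
    intro q hq s t hs
    apply integral_nonpos_of_ae
    have hsub : Set.Ioc s t ⊆ Set.Ici (0:ℝ) := fun x hx => le_trans hs hx.1.le
    have hode' := ae_restrict_of_ae_restrict_of_subset hsub hode
    filter_upwards [hode', ae_restrict_mem measurableSet_Ioc] with r hr hrmem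
    simp only [Pi.zero_apply]
    have hq0 := keyneg q hq (u r)
    have hl := (hbounds r (le_trans hs hrmem.1.le)).1
    rw [hr, real_inner_smul_left]
    have hnp : 0 ≤ lam r * -⟪T (u r) - u r, u r - q⟫ :=
      mul_nonneg (le_trans hlow.le hl) (by linarith)
    nlinarith
  -- Fejér property for the base point (valid without knowing integrability)
  have hbound_all : ∀ s : ℝ, 0 ≤ s → ‖u s - p‖ ≤ ‖u 0 - p‖ := by
    intro s hs
    by_cases hA : IntegrableOn u' (Set.Ioc 0 s)
    · have hftc := ftc_sq hs hA u p (fun r hr => hintIoc r hr.1)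
      have hneg := hode_neg p hp 0 s le_rfl
      nlinarith [norm_nonneg (u s - p), norm_nonneg (u 0 - p)]
    · rw [hjunk s hs hA]
  -- trivial case: the trajectory starts at the fixed point
  by_cases hu0p : u 0 = p
  · refine ⟨p, hp, ?_⟩
    intro y
    have hconst : ∀ t : ℝ, 0 ≤ t → u t = p := by
      intro t ht
      have := hbound_all t ht
      rw [hu0p, sub_self, norm_zero] at this
      have h0 : ‖u t - p‖ = 0 := le_antisymm this (norm_nonneg _)
      rwa [norm_eq_zero, sub_eq_zero] at h0
    apply Tendsto.congr' _ tendsto_const_nhds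
    filter_upwards [eventually_ge_atTop (0:ℝ)] with t ht
    rw [hconst t ht]
  have hnorm0 : 0 < ‖u 0 - p‖ := by
    rw [norm_sub_pos_iff]
    exact hu0p
  -- bound on the vector field
  have hgbd : ∀ (q : H), T q = q → ∀ x : H, ‖T x - x‖ ≤ 2 * ‖x - q‖ := by
    intro q hq x
    have h1 : T x - x = (T x - T q) + (q - x) := by rw [hq]; abel
    rw [h1]
    calc ‖(T x - T q) + (q - x)‖ ≤ ‖T x - T q‖ + ‖q - x‖ := norm_add_le _ _
      _ ≤ ‖x - q‖ + ‖x - q‖ := by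
          have h2 := hTnon x q
          rw [norm_sub_rev q x]
          linarith
      _ = 2 * ‖x - q‖ := by ring
  set K := 2 * lamUp * ‖u 0 - p‖ with hK
  have hKpos : 0 < K := by positivity
  have hu'bd : ∀ᵐ t ∂(volume.restrict (Set.Ici (0:ℝ))), ‖u' t‖ ≤ K := by
    filter_upwards [hode, ae_restrict_mem measurableSet_Ici] with t ht htmem
    rw [ht, norm_smul, Real.norm_eq_abs,
      abs_of_pos (lt_of_lt_of_le hlow (hbounds t htmem).1)]
    calc lam t * ‖T (u t) - u t‖
        ≤ lamUp * (2 * ‖u t - p‖) := by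
          apply mul_le_mul (hbounds t htmem).2 (hgbd p hp (u t)) (norm_nonneg _) hlamUp_pos.le
      _ ≤ lamUp * (2 * ‖u 0 - p‖) := by nlinarith [hbound_all t htmem]
      _ = K := by rw [hK]; ring
  -- measurability of u on [0, ∞)
  have uA : AEStronglyMeasurable u (volume.restrict (Set.Ici (0:ℝ))) := by
    have contOn : ∀ N : ℝ, 0 ≤ N → IntegrableOn u' (Set.Ioc 0 N) →
        ContinuousOn u (Set.Icc 0 N) := by
      intro N hN hint'
      have h1 : IntegrableOn u' (Set.Icc 0 N) :=
        (integrableOn_Icc_iff_integrableOn_Ioc).2 hint'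
      exact ((continuousOn_const.add (intervalIntegral.continuousOn_primitive h1)).congr
        (fun x hx => hintIoc x hx.1))
    by_cases hall : ∀ t : ℝ, 0 ≤ t → IntegrableOn u' (Set.Ioc 0 t)
    · have hcont : ContinuousOn u (Set.Ici (0:ℝ)) := by
        intro t ht
        have hN : t < t + 1 := by linarith
        have h4 : ContinuousWithinAt u (Set.Icc 0 (t+1)) t :=
          contOn (t+1) (by simp only [Set.mem_Ici] at ht; linarith)
            (hall (t+1) (by simp only [Set.mem_Ici] at ht; linarith)) t
            ⟨ht, by linarith⟩
        have h6 : ContinuousWithinAt u (Set.Ici (0:ℝ) ∩ Set.Iio (t+1)) t :=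
          h4.mono (fun x hx => ⟨hx.1, hx.2.le⟩)
        rwa [continuousWithinAt_inter (Iio_mem_nhds hN)] at h6
      exact hcont.aestronglyMeasurable measurableSet_Ici
    · push_neg at hall
      obtain ⟨N, hN0, hNni⟩ := hall
      set B := {t : ℝ | 0 ≤ t ∧ ¬ IntegrableOn u' (Set.Ioc 0 t)} with hB
      have hBne : B.Nonempty := ⟨N, hN0, hNni⟩
      have hBbd : BddBelow B := ⟨0, fun x hx => hx.1⟩
      set β := sInf B with hβ
      have hβ0 : 0 ≤ β := le_csInf hBne (fun x hx => hx.1)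
      have hlt : ∀ t : ℝ, 0 ≤ t → t < β → IntegrableOn u' (Set.Ioc 0 t) := by
        intro t ht hltβ
        by_contra hni
        exact absurd (csInf_le hBbd ⟨ht, hni⟩) (not_le.2 hltβ)
      have hgt : ∀ t : ℝ, β < t → u t = u 0 := by
        intro t htb
        obtain ⟨s, hsB, hst⟩ := exists_lt_of_csInf_lt hBne htb
        have hni : ¬ IntegrableOn u' (Set.Ioc 0 t) := by
          intro hi
          exact hsB.2 (hi.mono_set (Set.Ioc_subset_Ioc_right hst.le))
        exact hjunk t (le_trans hsB.1 hst.le) hni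
      have hcont2 : ContinuousOn u (Set.Ico 0 β) := by
        intro t ht
        have h1 : t < (t + β)/2 := by
          have := ht.2; simp only [Set.mem_Ico] at ht; linarith [ht.2]
        have h2 : (t + β)/2 < β := by
          simp only [Set.mem_Ico] at ht; linarith [ht.2]
        have h5 : ContinuousWithinAt u (Set.Icc 0 ((t + β)/2)) t :=
          contOn _ (by simp only [Set.mem_Ico] at ht; linarith [ht.1])
            (hlt _ (by simp only [Set.mem_Ico] at ht; linarith [ht.1]) h2) t
            ⟨ht.1, h1.le⟩
        have h6 : ContinuousWithinAt u (Set.Ico 0 β ∩ Set.Iio ((t + β)/2)) t :=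
          h5.mono (fun x hx => ⟨hx.1.1, hx.2.le⟩)
        rwa [continuousWithinAt_inter (Iio_mem_nhds h1)] at h6
      have hm1 : AEStronglyMeasurable u (volume.restrict (Set.Ico 0 β)) :=
        hcont2.aestronglyMeasurable measurableSet_Ico
      have hm2 : AEStronglyMeasurable u (volume.restrict (Set.Ici β)) := by
        apply (aestronglyMeasurable_const (b := u 0)).congr
        have hne : ∀ᵐ x ∂(volume.restrict (Set.Ici β)), x ≠ β := by
          apply ae_restrict_of_ae
          rw [ae_iff]
          have : {x : ℝ | ¬ x ≠ β} = {β} := by ext x; simp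
          rw [this]
          exact measure_singleton β
        filter_upwards [ae_restrict_mem measurableSet_Ici, hne] with x hx hxne
        exact (hgt x (lt_of_le_of_ne hx (Ne.symm hxne))).symm
      have hunion : Set.Ici (0:ℝ) = Set.Ico 0 β ∪ Set.Ici β :=
        (Set.Ico_union_Ici_eq_Ici hβ0).symm
      rw [hunion]
      exact aestronglyMeasurable_union_iff.2 ⟨hm1, hm2⟩
  have hu'm : AEStronglyMeasurable u' (volume.restrict (Set.Ici (0:ℝ))) := by
    have h1 : AEStronglyMeasurable (fun t => lam t • (T (u t) - u t))
        (volume.restrict (Set.Ici (0:ℝ))) := by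
      apply AEStronglyMeasurable.smul hlam_meas.aestronglyMeasurable
      exact (hTcont.comp_aestronglyMeasurable uA).sub uA
    apply h1.congr
    filter_upwards [hode] with t ht using ht.symm
  have hA : ∀ s t : ℝ, 0 ≤ s → IntegrableOn u' (Set.Ioc s t) := by
    intro s t hs
    have hsub : Set.Ioc s t ⊆ Set.Ici (0:ℝ) := fun x hx => le_trans hs hx.1.le
    apply Integrable.mono'
      (integrableOn_const measure_Ioc_lt_top.ne : IntegrableOn (fun _ => K) _ _)
      (hu'm.mono_measure (Measure.restrict_mono hsub le_rfl))
    exact ae_restrict_of_ae_restrict_of_subset hsub hu'bd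
  have hseg : ∀ s t : ℝ, 0 ≤ s → s ≤ t → u t = u s + ∫ r in Set.Ioc s t, u' r := by
    intro s t hs hst
    have h0t : (∫ r in Set.Ioc 0 t, u' r)
        = (∫ r in Set.Ioc 0 s, u' r) + ∫ r in Set.Ioc s t, u' r := by
      rw [← setIntegral_union (Set.Ioc_disjoint_Ioc_of_le le_rfl) measurableSet_Ioc
        (hA 0 s le_rfl) (hA s t hs), Set.Ioc_union_Ioc_eq_Ioc hs hst]
    rw [hintIoc t (le_trans hs hst), h0t, hintIoc s hs]
    abel
  -- Fejér property for arbitrary fixed points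
  have hFej : ∀ q : H, T q = q → ∀ s t : ℝ, 0 ≤ s → s ≤ t → ‖u t - q‖ ≤ ‖u s - q‖ := by
    intro q hq s t hs hst
    have hftc := ftc_sq hst (hA s t hs) u q (fun r hr => hseg s r hs hr.1)
    have hneg := hode_neg q hq s t hs
    nlinarith [norm_nonneg (u t - q), norm_nonneg (u s - q)]
  set g : ℝ → ℝ := fun t => ‖T (u t) - u t‖ with hgdef
  have uIoc : ∀ s t : ℝ, 0 ≤ s → AEStronglyMeasurable u (volume.restrict (Set.Ioc s t)) := by
    intro s t hs
    exact uA.mono_measure (Measure.restrict_mono (fun x hx => le_trans hs hx.1.le) le_rfl)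
  have hgbd0 : ∀ t : ℝ, 0 ≤ t → g t ≤ 2 * ‖u 0 - p‖ := by
    intro t ht
    calc g t ≤ 2 * ‖u t - p‖ := hgbd p hp (u t)
      _ ≤ 2 * ‖u 0 - p‖ := by nlinarith [hbound_all t ht]
  have hgm : ∀ s t : ℝ, 0 ≤ s → IntegrableOn (fun r => g r ^ 2) (Set.Ioc s t) := by
    intro s t hs
    have hmeas : AEStronglyMeasurable (fun r => g r ^ 2) (volume.restrict (Set.Ioc s t)) := by
      have h1 : AEStronglyMeasurable g (volume.restrict (Set.Ioc s t)) :=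
        ((hTcont.comp_aestronglyMeasurable (uIoc s t hs)).sub (uIoc s t hs)).norm
      have h2 : (fun r => g r ^ 2) = fun r => g r * g r := funext fun r => sq (g r)
      rw [h2]
      exact h1.mul h1
    apply Integrable.mono'
      (integrableOn_const measure_Ioc_lt_top.ne :
        IntegrableOn (fun _ => (2 * ‖u 0 - p‖)^2) _ _) hmeas
    filter_upwards [ae_restrict_mem measurableSet_Ioc] with r hr
    have h3 := hgbd0 r (le_trans hs hr.1.le)
    have h4 : 0 ≤ g r := norm_nonneg _
    rw [Real.norm_eq_abs, abs_of_nonneg (by positivity)]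
    nlinarith
  have hg2sum : ∀ t : ℝ, 0 ≤ t →
      lamLow / α * (∫ r in Set.Ioc 0 t, g r ^ 2) ≤ ‖u 0 - p‖^2 := by
    intro t ht
    have hftc := ftc_sq ht (hA 0 t le_rfl) u p (fun r hr => hintIoc r hr.1)
    have hinner_int : IntegrableOn (fun r => 2 * ⟪u' r, u r - p⟫) (Set.Ioc 0 t) := by
      have hsub : Set.Ioc (0:ℝ) t ⊆ Set.Ici (0:ℝ) := fun x hx => hx.1.le
      have hm : AEStronglyMeasurable (fun r => 2 * ⟪u' r, u r - p⟫)
          (volume.restrict (Set.Ioc (0:ℝ) t)) := by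
        apply AEStronglyMeasurable.const_mul
        exact ((hA 0 t le_rfl).aestronglyMeasurable).inner
          ((uIoc 0 t le_rfl).sub aestronglyMeasurable_const)
      apply Integrable.mono'
        (integrableOn_const measure_Ioc_lt_top.ne :
          IntegrableOn (fun _ => 2 * (K * ‖u 0 - p‖)) _ _) hm
      filter_upwards [ae_restrict_of_ae_restrict_of_subset hsub hu'bd,
        ae_restrict_mem measurableSet_Ioc] with r hr1 hr2
      have h5 : ‖u r - p‖ ≤ ‖u 0 - p‖ := hbound_all r hr2.1.le
      have h6 : |⟪u' r, u r - p⟫| ≤ ‖u' r‖ * ‖u r - p‖ := abs_real_inner_le_norm _ _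
      rw [Real.norm_eq_abs, abs_mul, abs_two]
      have h7 : ‖u' r‖ * ‖u r - p‖ ≤ K * ‖u 0 - p‖ := by
        apply mul_le_mul hr1 h5 (norm_nonneg _) hKpos.le
      nlinarith
    have hmono : (∫ r in Set.Ioc 0 t, lamLow / α * g r ^ 2)
        ≤ ∫ r in Set.Ioc 0 t, -(2 * ⟪u' r, u r - p⟫) := by
      apply integral_mono_ae ((hgm 0 t le_rfl).const_mul _) hinner_int.neg
      have hsub : Set.Ioc (0:ℝ) t ⊆ Set.Ici (0:ℝ) := fun x hx => hx.1.le
      filter_upwards [ae_restrict_of_ae_restrict_of_subset hsub hode,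
        ae_restrict_mem measurableSet_Ioc] with r hr1 hr2
      show lamLow / α * g r ^ 2 ≤ -(2 * ⟪u' r, u r - p⟫)
      have hl := (hbounds r hr2.1.le).1
      have hkey := key2 p hp (u r)
      have hg2 : (0:ℝ) ≤ g r ^ 2 := sq_nonneg _
      rw [hr1, real_inner_smul_left]
      have hstep1 : 2 * ⟪T (u r) - u r, u r - p⟫ ≤ -(1/α) * g r ^ 2 := hkey
      have hlam_pos : 0 < lam r := lt_of_lt_of_le hlow hl
      have : lam r * (2 * ⟪T (u r) - u r, u r - p⟫) ≤ lam r * (-(1/α) * g r ^ 2) :=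
        mul_le_mul_of_nonneg_left hstep1 hlam_pos.le
      have h8 : lam r * (-(1/α) * g r ^ 2) ≤ lamLow * (-(1/α) * g r ^ 2) := by
        apply mul_le_mul_of_nonpos_right hl
        nlinarith
      have h9 : lamLow * (-(1/α) * g r ^ 2) = -(lamLow / α * g r ^ 2) := by
        field_simp
      nlinarith
    rw [integral_neg] at hmono
    have hscale : (∫ r in Set.Ioc 0 t, lamLow / α * g r ^ 2)
        = lamLow / α * ∫ r in Set.Ioc 0 t, g r ^ 2 :=
      MeasureTheory.integral_const_mul _ _
    rw [hscale] at hmono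
    have h10 : (∫ r in Set.Ioc 0 t, 2 * ⟪u' r, u r - p⟫)
        = ‖u t - p‖^2 - ‖u 0 - p‖^2 := by linarith [hftc]
    rw [h10] at hmono
    nlinarith [sq_nonneg ‖u t - p‖]
  have hLip : ∀ s t : ℝ, 0 ≤ s → s ≤ t → ‖u t - u s‖ ≤ K * (t - s) := by
    intro s t hs hst
    rw [hseg s t hs hst]
    rw [add_sub_cancel_left]
    calc ‖∫ r in Set.Ioc s t, u' r‖ ≤ ∫ r in Set.Ioc s t, ‖u' r‖ :=
          norm_integral_le_integral_norm _
      _ ≤ ∫ _r in Set.Ioc s t, K := by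
          apply integral_mono_ae (hA s t hs).norm
            (integrableOn_const measure_Ioc_lt_top.ne)
          exact ae_restrict_of_ae_restrict_of_subset (fun x hx => le_trans hs hx.1.le) hu'bd
      _ = K * (t - s) := by
          rw [setIntegral_const, Real.volume_real_Ioc, smul_eq_mul,
            max_eq_left (by linarith)]
          ring
  -- g(t) → 0
  have hgtend : Tendsto g atTop (nhds 0) := by
    set G0 := 2 * ‖u 0 - p‖ with hG0
    have hG0pos : 0 < G0 := by positivity
    set M := 4 * K * G0 with hM
    have hMpos : 0 < M := by positivity
    have hsq : Tendsto (fun t => g t ^ 2) atTop (nhds 0) := by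
      apply barbalat (M := M) (C := α * ‖u 0 - p‖^2 / lamLow) hMpos
      · intro t _; positivity
      · intro s t hs hst
        have h1 : |g t - g s| ≤ 2 * (K * (t - s)) := by
          have h2 : |g t - g s| ≤ ‖(T (u t) - u t) - (T (u s) - u s)‖ :=
            abs_norm_sub_norm_le _ _
          have h3 : ‖(T (u t) - u t) - (T (u s) - u s)‖
              ≤ ‖T (u t) - T (u s)‖ + ‖u t - u s‖ := by
            have h4 : (T (u t) - u t) - (T (u s) - u s)
                = (T (u t) - T (u s)) + (u s - u t) := by abel
            rw [h4]
            calc ‖(T (u t) - T (u s)) + (u s - u t)‖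
                ≤ ‖T (u t) - T (u s)‖ + ‖u s - u t‖ := norm_add_le _ _
              _ = ‖T (u t) - T (u s)‖ + ‖u t - u s‖ := by rw [norm_sub_rev (u s) (u t)]
          have h5 := hTnon (u t) (u s)
          have h6 := hLip s t hs hst
          linarith
        have h7 : |g t + g s| ≤ 2 * G0 := by
          have := hgbd0 t (le_trans hs hst)
          have := hgbd0 s hs
          rw [abs_of_nonneg (add_nonneg (norm_nonneg _) (norm_nonneg _))]
          rw [hG0]
          linarith
        have h8 : |g t ^ 2 - g s ^ 2| = |g t - g s| * |g t + g s| := by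
          rw [← abs_mul]
          congr 1
          ring
        rw [h8]
        calc |g t - g s| * |g t + g s| ≤ (2 * (K * (t - s))) * (2 * G0) := by
              apply mul_le_mul h1 h7 (abs_nonneg _)
                (mul_nonneg (by norm_num) (mul_nonneg hKpos.le (sub_nonneg.2 hst)))
          _ = M * (t - s) := by rw [hM]; ring
      · exact fun s t hs => hgm s t hs
      · intro t ht
        have h11 := hg2sum t ht
        rw [le_div_iff₀ hlow]
        have h12 : 0 < lamLow / α := by positivity
        calc (∫ r in Set.Ioc 0 t, g r ^ 2) * lamLow
            = (lamLow / α * (∫ r in Set.Ioc 0 t, g r ^ 2)) * α := by field_simp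
          _ ≤ ‖u 0 - p‖^2 * α := by nlinarith
          _ = α * ‖u 0 - p‖^2 := by ring
    have hg_eq : g = fun t => Real.sqrt (g t ^ 2) :=
      funext fun t => (Real.sqrt_sq (norm_nonneg _)).symm
    rw [hg_eq]
    have := hsq.sqrt
    rwa [Real.sqrt_zero] at this
  -- limits of distances to fixed points
  have hLimq : ∀ q : H, T q = q → ∃ l, Tendsto (fun t => ‖u t - q‖) atTop (nhds l) :=
    fun q hq => tendsto_of_antitone_on _ (fun s t hs hst => hFej q hq s t hs hst)
      (fun t _ => norm_nonneg _)
  set r0 := ‖u 0 - p‖ + ‖p‖ with hr0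
  have hubd : ∀ t : ℝ, 0 ≤ t → ‖u t‖ ≤ r0 := by
    intro t ht
    calc ‖u t‖ = ‖(u t - p) + p‖ := by rw [sub_add_cancel]
      _ ≤ ‖u t - p‖ + ‖p‖ := norm_add_le _ _
      _ ≤ r0 := by have := hbound_all t ht; rw [hr0]; linarith
  -- weak cluster points along ultrafilters
  have hcluster : ∀ U : Ultrafilter ℝ, (U : Filter ℝ) ≤ atTop →
      ∃ w : H, ∀ y : H, Tendsto (fun t => ⟪u t, y⟫) (U : Filter ℝ) (nhds ⟪w, y⟫) := by
    intro U hU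
    set D := InnerProductSpace.toDual ℝ H with hD
    set Φ : ℝ → WeakDual ℝ H := fun t => StrongDual.toWeakDual (D (u t)) with hΦ
    have hmem : ∀ᶠ t in (U : Filter ℝ),
        Φ t ∈ WeakDual.toStrongDual ⁻¹' Metric.closedBall 0 r0 := by
      filter_upwards [hU (eventually_ge_atTop (0:ℝ))] with t ht
      simp only [Set.mem_preimage, Metric.mem_closedBall, dist_zero_right]
      have h1 : WeakDual.toStrongDual (Φ t) = D (u t) := rfl
      rw [h1, D.norm_map]
      exact hubd t ht
    have hle : (Ultrafilter.map Φ U : Filter (WeakDual ℝ H))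
        ≤ Filter.principal (WeakDual.toStrongDual ⁻¹' Metric.closedBall 0 r0) := by
      rw [le_principal_iff]
      exact hmem
    obtain ⟨ψ, -, hψ⟩ :=
      (WeakDual.isCompact_closedBall (𝕜 := ℝ) (E := H) 0 r0).ultrafilter_le_nhds
        (U.map Φ) hle
    refine ⟨D.symm (WeakDual.toStrongDual ψ), ?_⟩
    intro y
    have htd : Tendsto Φ (U : Filter ℝ) (nhds ψ) := hψ
    have heval : Tendsto (fun t => Φ t y) (U : Filter ℝ) (nhds (ψ y)) :=
      ((WeakDual.eval_continuous y).tendsto ψ).comp htd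
    have h1 : (fun t => ⟪u t, y⟫) = fun t => Φ t y := by
      funext t
      exact (InnerProductSpace.toDual_apply_apply).symm
    have h2 : ψ y = ⟪D.symm (WeakDual.toStrongDual ψ), y⟫ := by
      calc ψ y = (D (D.symm (WeakDual.toStrongDual ψ))) y := by
            rw [D.apply_symm_apply]; rfl
        _ = ⟪D.symm (WeakDual.toStrongDual ψ), y⟫ := InnerProductSpace.toDual_apply_apply
    rw [h1, ← h2]
    exact heval
  -- demiclosedness along ultrafilters
  have hdemi : ∀ U : Ultrafilter ℝ, (U : Filter ℝ) ≤ atTop → ∀ w : H,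
      (∀ y : H, Tendsto (fun t => ⟪u t, y⟫) (U : Filter ℝ) (nhds ⟪w, y⟫)) → T w = w := by
    intro U hU w hw
    have hge : ∀ᶠ t in (U : Filter ℝ), (0:ℝ) ≤ t := hU (eventually_ge_atTop 0)
    have hr0w : 0 ≤ r0 + ‖w‖ := by
      have := hubd 0 le_rfl
      have := norm_nonneg (u 0)
      have := norm_nonneg w
      linarith
    have hbw : ∀ᶠ t in (U : Filter ℝ),
        ‖u t - w‖ ∈ Set.Icc (-(r0 + ‖w‖)) (r0 + ‖w‖) := by
      filter_upwards [hge] with t ht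
      constructor
      · linarith [norm_nonneg (u t - w)]
      · calc ‖u t - w‖ ≤ ‖u t‖ + ‖w‖ := norm_sub_le _ _
          _ ≤ r0 + ‖w‖ := by linarith [hubd t ht]
    obtain ⟨ℓ, hℓ⟩ := ultra_tendsto_of_bounded U _ _ hbw
    have hLHS : Tendsto (fun t => ‖u t - T w‖^2) (U : Filter ℝ)
        (nhds (ℓ^2 + 0 + ‖w - T w‖^2)) := by
      have hexp : ∀ t, ‖u t - T w‖^2
          = ‖u t - w‖^2 + 2 * ⟪u t - w, w - T w⟫ + ‖w - T w‖^2 := by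
        intro t
        have h4 : u t - T w = (u t - w) + (w - T w) := by abel
        rw [h4, norm_add_sq_real]
      have hmid : Tendsto (fun t => 2 * ⟪u t - w, w - T w⟫) (U : Filter ℝ) (nhds 0) := by
        have h5 : ∀ t, 2 * ⟪u t - w, w - T w⟫
            = 2 * (⟪u t, w - T w⟫ - ⟪w, w - T w⟫) := by
          intro t; rw [inner_sub_left]
        have h6 : Tendsto (fun t => ⟪u t, w - T w⟫ - ⟪w, w - T w⟫) (U : Filter ℝ)
            (nhds (⟪w, w - T w⟫ - ⟪w, w - T w⟫)) :=
          (hw (w - T w)).sub_const _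
        have h7 := h6.const_mul (2:ℝ)
        rw [sub_self, mul_zero] at h7
        apply Tendsto.congr (fun t => (h5 t).symm) h7
      have h8 := ((hℓ.pow 2).add hmid).add_const (‖w - T w‖^2)
      apply Tendsto.congr (fun t => (hexp t).symm) h8
    have hRHS : Tendsto (fun t => (g t + ‖u t - w‖)^2) (U : Filter ℝ) (nhds (ℓ^2)) := by
      have h7 : Tendsto g (U : Filter ℝ) (nhds 0) := hgtend.mono_left hU
      have h9 := (h7.add hℓ).pow 2
      rwa [zero_add] at h9
    have hptwise : ∀ᶠ t in (U : Filter ℝ),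
        ‖u t - T w‖^2 ≤ (g t + ‖u t - w‖)^2 := by
      filter_upwards [hge] with t ht
      have h10 : ‖u t - T w‖ ≤ g t + ‖u t - w‖ := by
        calc ‖u t - T w‖ = ‖(u t - T (u t)) + (T (u t) - T w)‖ := by
              congr 1; abel
          _ ≤ ‖u t - T (u t)‖ + ‖T (u t) - T w‖ := norm_add_le _ _
          _ ≤ g t + ‖u t - w‖ := by
              have h11 : ‖u t - T (u t)‖ = g t := by rw [norm_sub_rev]
              have h12 := hTnon (u t) w
              linarith
      have h13 : (0:ℝ) ≤ ‖u t - T w‖ := norm_nonneg _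
      nlinarith
    have hle2 : ℓ^2 + 0 + ‖w - T w‖^2 ≤ ℓ^2 :=
      le_of_tendsto_of_tendsto hLHS hRHS hptwise
    have h14 : ‖w - T w‖^2 ≤ 0 := by linarith
    have h15 : ‖w - T w‖ = 0 := by nlinarith [norm_nonneg (w - T w)]
    rw [norm_eq_zero, sub_eq_zero] at h15
    exact h15.symm
  -- uniqueness of weak subsequential limits that are fixed points
  have huniq : ∀ (U V : Ultrafilter ℝ), (U : Filter ℝ) ≤ atTop → (V : Filter ℝ) ≤ atTop →
      ∀ w₁ w₂ : H, T w₁ = w₁ → T w₂ = w₂ →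
      (∀ y, Tendsto (fun t => ⟪u t, y⟫) (U : Filter ℝ) (nhds ⟪w₁, y⟫)) →
      (∀ y, Tendsto (fun t => ⟪u t, y⟫) (V : Filter ℝ) (nhds ⟪w₂, y⟫)) → w₁ = w₂ := by
    intro U V hU hV w₁ w₂ hw₁ hw₂ hUW hVW
    obtain ⟨l₁, hl₁⟩ := hLimq w₁ hw₁
    obtain ⟨l₂, hl₂⟩ := hLimq w₂ hw₂
    set c : ℝ → ℝ := fun t => ‖u t - w₁‖^2 - ‖u t - w₂‖^2 with hc
    have hctend : Tendsto c atTop (nhds (l₁^2 - l₂^2)) := (hl₁.pow 2).sub (hl₂.pow 2)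
    have hcform : ∀ t, c t = -2 * ⟪u t, w₁⟫ + 2 * ⟪u t, w₂⟫ + ‖w₁‖^2 - ‖w₂‖^2 := by
      intro t
      rw [hc]
      dsimp only
      rw [← real_inner_self_eq_norm_sq (u t - w₁), ← real_inner_self_eq_norm_sq (u t - w₂),
        inner_sub_left, inner_sub_left, inner_sub_right, inner_sub_right,
        inner_sub_right, inner_sub_right,
        ← real_inner_self_eq_norm_sq w₁, ← real_inner_self_eq_norm_sq w₂,
        real_inner_comm w₁ (u t), real_inner_comm w₂ (u t)]
      ring
    have limitU : Tendsto c (U : Filter ℝ)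
        (nhds (-2 * ⟪w₁, w₁⟫ + 2 * ⟪w₁, w₂⟫ + ‖w₁‖^2 - ‖w₂‖^2)) := by
      have h1 := ((((hUW w₁).const_mul (-2:ℝ)).add ((hUW w₂).const_mul (2:ℝ))).add_const
        (‖w₁‖^2)).sub_const (‖w₂‖^2)
      apply Tendsto.congr (fun t => (hcform t).symm) h1
    have limitV : Tendsto c (V : Filter ℝ)
        (nhds (-2 * ⟪w₂, w₁⟫ + 2 * ⟪w₂, w₂⟫ + ‖w₁‖^2 - ‖w₂‖^2)) := by
      have h1 := ((((hVW w₁).const_mul (-2:ℝ)).add ((hVW w₂).const_mul (2:ℝ))).add_const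
        (‖w₁‖^2)).sub_const (‖w₂‖^2)
      apply Tendsto.congr (fun t => (hcform t).symm) h1
    have hdU : -2 * ⟪w₁, w₁⟫ + 2 * ⟪w₁, w₂⟫ + ‖w₁‖^2 - ‖w₂‖^2 = l₁^2 - l₂^2 :=
      tendsto_nhds_unique limitU (hctend.mono_left hU)
    have hdV : -2 * ⟪w₂, w₁⟫ + 2 * ⟪w₂, w₂⟫ + ‖w₁‖^2 - ‖w₂‖^2 = l₁^2 - l₂^2 :=
      tendsto_nhds_unique limitV (hctend.mono_left hV)
    have hinner : ⟪w₁ - w₂, w₁ - w₂⟫ = 0 := by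
      have e1 : ⟪w₁ - w₂, w₁ - w₂⟫ = ⟪w₁, w₁⟫ - ⟪w₁, w₂⟫ - ⟪w₂, w₁⟫ + ⟪w₂, w₂⟫ := by
        rw [inner_sub_left, inner_sub_right, inner_sub_right]
        ring
      have e2 : ⟪w₁, w₂⟫ = ⟪w₂, w₁⟫ := real_inner_comm _ _
      rw [e1]
      linarith
    have : w₁ - w₂ = 0 := by rwa [inner_self_eq_zero] at hinner
    exact sub_eq_zero.mp this
  -- assemble the final statement
  set U0 : Ultrafilter ℝ := Ultrafilter.of atTop with hU0
  have hU0le : (U0 : Filter ℝ) ≤ atTop := Ultrafilter.of_le _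
  obtain ⟨ubar, hubar⟩ := hcluster U0 hU0le
  have hTubar : T ubar = ubar := hdemi U0 hU0le ubar hubar
  refine ⟨ubar, hTubar, ?_⟩
  intro y
  rw [tendsto_iff_ultrafilter]
  intro V hV
  obtain ⟨w, hw⟩ := hcluster V hV
  have hTw : T w = w := hdemi V hV w hw
  have heq : w = ubar := huniq V U0 hV hU0le w ubar hTw hTubar hw hubar
  rw [← heq]
  exact hw y
end

section
/- Let A : H → 2^H be maximally monotone, B : H → H β-cocoercive, M strongly positive, γ ∈ (0, 2κ) where κ > 0 satisfies that M⁻¹B and M⁻¹A_γ are both κ-cocoercive in the M-inner product. Then the backward-forward operator T := (I - γM⁻¹B) ∘ J^M_{γA} is (1/δ)-averaged with respect to the M-norm, where δ := (2κ + γ)/(2γ). -/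
local notation "⟪" x ", " y "⟫" => @inner ℝ _ _ x y

/-- The backward-forward operator `T = (I - γM⁻¹B) ∘ J^M_{γA}`, with
`J^M_{γA} = I - γM⁻¹A_γ`, is `1/δ`-averaged in the `M`-norm with
`δ = (2κ + γ)/(2γ)`, when `M⁻¹B` and `M⁻¹A_γ` are `κ`-cocoercive in the
`M`-inner product and `γ ∈ (0, 2κ)`. -/
theorem stmt_14 {H : Type*} [NormedAddCommGroup H] [InnerProductSpace ℝ H]
    (γ κ : ℝ) (hκ : 0 < κ) (hγ : 0 < γ) (hγ2 : γ < 2 * κ)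
    (A : H → Set H) (B : H → H) (M Minv : H →L[ℝ] H)
    (hMinv : ∀ x : H, Minv (M x) = x ∧ M (Minv x) = x)
    (hMsa : ∀ x y : H, ⟪M x, y⟫ = ⟪x, M y⟫)
    (hMpos : ∃ m : ℝ, 0 < m ∧ ∀ x : H, ⟪M x, x⟫ ≥ m * ‖x‖ ^ 2)
    -- `A` is maximally monotone:
    (hAmono : ∀ x y u v : H, u ∈ A x → v ∈ A y → ⟪u - v, x - y⟫ ≥ 0)
    (hAmax : ∀ x u : H, (∀ y v : H, v ∈ A y → ⟪u - v, x - y⟫ ≥ 0) → u ∈ A x)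
    -- `Aγ` is the Yosida approximation of `A`, so that `J^M_{γA} = I - γM⁻¹Aγ`:
    (Aγ : H → H) (hAγ : ∀ x : H, Aγ x ∈ A (x - γ • Minv (Aγ x)))
    -- `M⁻¹B` is `κ`-cocoercive in the `M`-inner product:
    (hB : ∀ x y : H, ⟪M (Minv (B x) - Minv (B y)), x - y⟫ ≥
      κ * ⟪M (Minv (B x) - Minv (B y)), Minv (B x) - Minv (B y)⟫)
    -- `M⁻¹Aγ` is `κ`-cocoercive in the `M`-inner product:
    (hA : ∀ x y : H, ⟪M (Minv (Aγ x) - Minv (Aγ y)), x - y⟫ ≥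
      κ * ⟪M (Minv (Aγ x) - Minv (Aγ y)), Minv (Aγ x) - Minv (Aγ y)⟫) :
    ∃ R : H → H,
      -- `R` is nonexpansive in the `M`-norm:
      (∀ x y : H, ⟪M (R x - R y), R x - R y⟫ ≤ ⟪M (x - y), x - y⟫) ∧
      -- `T = (I - γM⁻¹B) ∘ (I - γM⁻¹Aγ) = (1 - 1/δ)I + (1/δ)R` with `δ = (2κ+γ)/(2γ)`:
      ∀ x : H,
        (x - γ • Minv (Aγ x)) - γ • Minv (B (x - γ • Minv (Aγ x))) =
          (1 - 1 / ((2 * κ + γ) / (2 * γ))) • x + (1 / ((2 * κ + γ) / (2 * γ))) • R x := by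
  set c : ℝ := (2 * κ + γ) / 2 with hc
  refine ⟨fun x => x - c • (Minv (Aγ x) + Minv (B (x - γ • Minv (Aγ x)))), ?_, ?_⟩
  · intro x y
    set u : H := x - y with hu
    set a : H := Minv (Aγ x) - Minv (Aγ y) with ha
    set b : H := Minv (B (x - γ • Minv (Aγ x))) - Minv (B (y - γ • Minv (Aγ y))) with hb
    have hRxy : (x - c • (Minv (Aγ x) + Minv (B (x - γ • Minv (Aγ x))))) -
        (y - c • (Minv (Aγ y) + Minv (B (y - γ • Minv (Aγ y))))) = u - c • (a + b) := by
      rw [hu, ha, hb]; module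
    rw [hRxy]
    -- cocoercivity of M⁻¹Aγ
    have h1 : ⟪M a, u⟫ ≥ κ * ⟪M a, a⟫ := hA x y
    -- cocoercivity of M⁻¹B at the resolvent points
    have h2' := hB (x - γ • Minv (Aγ x)) (y - γ • Minv (Aγ y))
    have hJ : (x - γ • Minv (Aγ x)) - (y - γ • Minv (Aγ y)) = u - γ • a := by
      rw [hu, ha]; module
    rw [hJ] at h2'
    have h2 : ⟪M b, u - γ • a⟫ ≥ κ * ⟪M b, b⟫ := h2'
    -- positivity of M on a - b
    obtain ⟨m, hm, hMp⟩ := hMpos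
    have h3 : ⟪M (a - b), a - b⟫ ≥ 0 := by
      have := hMp (a - b)
      nlinarith [sq_nonneg ‖a - b‖]
    -- symmetry facts
    have hsab : ⟪M a, b⟫ = ⟪M b, a⟫ := by
      rw [hMsa a b, real_inner_comm]
    have hsau : ⟪M a, u⟫ = ⟪M u, a⟫ := by
      rw [hMsa a u, real_inner_comm]
    have hsbu : ⟪M b, u⟫ = ⟪M u, b⟫ := by
      rw [hMsa b u, real_inner_comm]
    have hexp : ⟪M (u - c • (a + b)), u - c • (a + b)⟫ =
        ⟪M u, u⟫ - 2 * c * (⟪M a, u⟫ + ⟪M b, u⟫)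
          + c ^ 2 * (⟪M a, a⟫ + 2 * ⟪M a, b⟫ + ⟪M b, b⟫) := by
      simp only [map_sub, map_add, map_smul, inner_sub_left, inner_sub_right,
        inner_add_left, inner_add_right, real_inner_smul_left, real_inner_smul_right]
      rw [hsab, hsau, hsbu]; ring
    have hexp3 : ⟪M (a - b), a - b⟫ = ⟪M a, a⟫ - 2 * ⟪M a, b⟫ + ⟪M b, b⟫ := by
      simp only [map_sub, inner_sub_left, inner_sub_right]
      rw [hsab]; ring
    have hexp2 : ⟪M b, u - γ • a⟫ = ⟪M b, u⟫ - γ * ⟪M b, a⟫ := by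
      simp only [inner_sub_right, real_inner_smul_right]
    rw [hexp]
    rw [hexp2] at h2
    rw [hexp3] at h3
    rw [← hsab] at h2
    have hcpos : 0 < c := by rw [hc]; linarith
    rw [hc]
    nlinarith [mul_le_mul_of_nonneg_left h1 (show (0:ℝ) ≤ 2 * κ + γ by linarith),
      mul_le_mul_of_nonneg_left h2 (show (0:ℝ) ≤ 2 * κ + γ by linarith),
      mul_le_mul_of_nonneg_left h3
        (show (0:ℝ) ≤ (2 * κ + γ) * (2 * κ - γ) by nlinarith)]
  · intro x
    have hγ' : γ ≠ 0 := ne_of_gt hγ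
    have hden : 2 * κ + γ ≠ 0 := by positivity
    have hs1 : (1 : ℝ) - 1 / ((2 * κ + γ) / (2 * γ)) = (2 * κ - γ) / (2 * κ + γ) := by
      field_simp; ring
    have hs2 : (1 / ((2 * κ + γ) / (2 * γ))) * c = γ := by
      rw [hc]; field_simp
    have hs3 : (2 * κ - γ) / (2 * κ + γ) + 1 / ((2 * κ + γ) / (2 * γ)) = 1 := by
      field_simp; ring
    rw [hs1, smul_sub, smul_smul, hs2]
    have : ((2 * κ - γ) / (2 * κ + γ)) • x + (1 / ((2 * κ + γ) / (2 * γ))) • x = x := by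
      rw [← add_smul, hs3, one_smul]
    rw [smul_add, ← add_sub_assoc, this]
    module
end

section
/- Let A : H → 2^H be maximally monotone with Yosida approximation A_γ (γ > 0), B : H → H, and M strongly positive, such that M⁻¹B and M⁻¹A_γ are both κ-cocoercive in the M-inner product for some κ > 0, and let 0 < γ < 2κ. Then M⁻¹A_γ is constant on Zer(B_{-γ} + A_γ): if u, v ∈ H satisfy -M⁻¹A_γ u = M⁻¹B(u - γM⁻¹A_γ u) and -M⁻¹A_γ v = M⁻¹B(v - γM⁻¹A_γ v), then A_γ u = A_γ v. -/
local notation "⟪" x ", " y "⟫" => @inner ℝ _ _ x y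

/-- `M⁻¹A_γ` is constant on `Zer(B_{-γ} + A_γ)`: if both `u` and `v` satisfy
`-M⁻¹A_γ w = M⁻¹B(w - γM⁻¹A_γ w)` and `M⁻¹B`, `M⁻¹A_γ` are `κ`-cocoercive in the
`M`-inner product with `0 < γ < 2κ`, then `A_γ u = A_γ v`. -/
theorem stmt_15 {H : Type*} [NormedAddCommGroup H] [InnerProductSpace ℝ H]
    (γ κ : ℝ) (hκ : 0 < κ) (hγ : 0 < γ) (hγ2 : γ < 2 * κ)
    (A : H → Set H) (B : H → H) (M Minv : H →L[ℝ] H)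
    (hMinv : ∀ x : H, Minv (M x) = x ∧ M (Minv x) = x)
    (hMsa : ∀ x y : H, ⟪M x, y⟫ = ⟪x, M y⟫)
    (hMpos : ∃ m : ℝ, 0 < m ∧ ∀ x : H, ⟪M x, x⟫ ≥ m * ‖x‖ ^ 2)
    -- `Aγ` is the Yosida approximation of `A` (single-valued, everywhere defined):
    (Aγ : H → H) (hAγ : ∀ x : H, Aγ x ∈ A (x - γ • Minv (Aγ x)))
    -- `M⁻¹B` is `κ`-cocoercive in the `M`-inner product:
    (hB : ∀ x y : H, ⟪M (Minv (B x) - Minv (B y)), x - y⟫ ≥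
      κ * ⟪M (Minv (B x) - Minv (B y)), Minv (B x) - Minv (B y)⟫)
    -- `M⁻¹Aγ` is `κ`-cocoercive in the `M`-inner product:
    (hA : ∀ x y : H, ⟪M (Minv (Aγ x) - Minv (Aγ y)), x - y⟫ ≥
      κ * ⟪M (Minv (Aγ x) - Minv (Aγ y)), Minv (Aγ x) - Minv (Aγ y)⟫)
    (u v : H)
    (hu : -(Minv (Aγ u)) = Minv (B (u - γ • Minv (Aγ u))))
    (hv : -(Minv (Aγ v)) = Minv (B (v - γ • Minv (Aγ v)))) :
    Aγ u = Aγ v := by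
  set a := Minv (Aγ u) with ha
  set b := Minv (Aγ v) with hb
  set d := a - b with hd
  set q : ℝ := ⟪M d, d⟫ with hq
  have h1 : ⟪M d, u - v⟫ ≥ κ * q := hA u v
  have h2 := hB (u - γ • a) (v - γ • b)
  rw [← hu, ← hv] at h2
  have hneg : -a - -b = -d := by simp [hd]; abel
  rw [hneg] at h2
  have hMneg : M (-d) = -(M d) := map_neg M d
  have h2' : -⟪M d, u - v⟫ + γ * q ≥ κ * q := by
    have hexp : ⟪M (-d), u - γ • a - (v - γ • b)⟫ = -⟪M d, u - v⟫ + γ * q := by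
      rw [hMneg]
      have : u - γ • a - (v - γ • b) = (u - v) - γ • d := by rw [hd, smul_sub]; abel
      rw [this, inner_neg_left, inner_sub_right, real_inner_smul_right]
      ring
    have hr : κ * ⟪M (-d), -d⟫ = κ * q := by
      rw [hMneg, inner_neg_neg]
    rw [hexp, hr] at h2
    exact h2
  have hqle : q ≤ 0 := by nlinarith
  obtain ⟨m, hm, hmpos⟩ := hMpos
  have hq0 : m * ‖d‖ ^ 2 ≤ q := hmpos d
  have hd0 : d = 0 := by
    have : ‖d‖ ^ 2 ≤ 0 := by nlinarith
    have : ‖d‖ = 0 := by nlinarith [norm_nonneg d, sq_nonneg ‖d‖]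
    simpa using this
  have hab : a = b := by rwa [hd, sub_eq_zero] at hd0
  have := congrArg M hab
  rwa [ha, hb, (hMinv (Aγ u)).2, (hMinv (Aγ v)).2] at this
end

section
/- Let γ > 0 and g : H → ℝ be convex, Fréchet differentiable with ∇g β-cocoercive, and γ ∈ (0, β]. Define g_{-γ}(u) := sup_{η ∈ H} { g(η) - (1/(2γ))‖u - η‖² }. Then g_{-γ} is a proper, convex, lower semicontinuous function, and its proximal operator satisfies prox_{γ g_{-γ}} = I - γ∇g, i.e., for every u ∈ H, u - γ∇g(u) = argmin_{v ∈ H} { g_{-γ}(v) + (1/(2γ))‖v - u‖² }. -/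
local notation "⟪" x ", " y "⟫" => @inner ℝ _ _ x y

/-- The "anti-Moreau envelope" of `g` of index `-γ`:
`g_{-γ}(u) = sup_η { g(η) - (1/(2γ))‖u - η‖² }`, as an extended-real-valued function. -/
noncomputable def antiEnvelope {H : Type*} [NormedAddCommGroup H] [InnerProductSpace ℝ H]
    (g : H → ℝ) (γ : ℝ) : H → EReal :=
  fun u => ⨆ η : H, ((g η - (1 / (2 * γ)) * ‖u - η‖ ^ 2 : ℝ) : EReal)

open Set

section Aux

variable {H : Type*} [NormedAddCommGroup H] [InnerProductSpace ℝ H] [CompleteSpace H]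

lemma aux_hasDerivAt_line (g : H → ℝ) (g' : H → H) (hg : ∀ x, HasGradientAt g (g' x) x)
    (x d : H) (t : ℝ) :
    HasDerivAt (fun s : ℝ => g (x + s • d)) ⟪g' (x + t • d), d⟫ t := by
  have hc : HasDerivAt (fun s : ℝ => x + s • d) d t := by
    simpa using ((hasDerivAt_id t).smul_const d).const_add x
  have h2 := ((hg (x + t • d)).hasFDerivAt).comp_hasDerivAt t hc
  simpa [InnerProductSpace.toDual_apply_apply, Function.comp_def] using h2

omit [CompleteSpace H] in
lemma aux_line_convex (g : H → ℝ) (hconv : ConvexOn ℝ Set.univ g) (x d : H) :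
    ConvexOn ℝ Set.univ (fun t : ℝ => g (x + t • d)) := by
  refine ⟨convex_univ, fun a _ b _ p q hp hq hpq => ?_⟩
  have h : x + (p • a + q • b) • d = p • (x + a • d) + q • (x + b • d) := by
    rw [smul_add, smul_add]
    match_scalars <;> simp [hpq]
  simp only []
  rw [h]
  simpa using hconv.2 (mem_univ (x + a • d)) (mem_univ (x + b • d)) hp hq hpq

lemma aux_subgrad (g : H → ℝ) (hconv : ConvexOn ℝ Set.univ g) (g' : H → H)
    (hg : ∀ x, HasGradientAt g (g' x) x) (x y : H) :
    g x + ⟪g' x, y - x⟫ ≤ g y := by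
  set d := y - x with hd
  have hφ := aux_line_convex g hconv x d
  have hder : HasDerivAt (fun t : ℝ => g (x + t • d)) ⟪g' x, d⟫ 0 := by
    simpa using aux_hasDerivAt_line g g' hg x d 0
  have := hφ.le_slope_of_hasDerivAt (mem_univ (0:ℝ)) (mem_univ (1:ℝ)) one_pos hder
  simp [slope_def_field, hd] at this
  linarith

lemma aux_descent (β : ℝ) (hβ : 0 < β) (g : H → ℝ) (g' : H → H)
    (hg : ∀ x, HasGradientAt g (g' x) x)
    (hcoco : ∀ x y : H, ⟪g' x - g' y, x - y⟫ ≥ β * ‖g' x - g' y‖ ^ 2) (x y : H) :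
    g y ≤ g x + ⟪g' x, y - x⟫ + 1 / (2 * β) * ‖y - x‖ ^ 2 := by
  set d := y - x with hd
  set ψ : ℝ → ℝ := fun t => g (x + t • d) - t * ⟪g' x, d⟫ - t ^ 2 / (2 * β) * ‖d‖ ^ 2
    with hψ
  have hψd : ∀ t : ℝ, HasDerivAt ψ (⟪g' (x + t • d), d⟫ - ⟪g' x, d⟫ - t / β * ‖d‖ ^ 2) t := by
    intro t
    have h1 := aux_hasDerivAt_line g g' hg x d t
    have h2 : HasDerivAt (fun t : ℝ => t * ⟪g' x, d⟫) ⟪g' x, d⟫ t := by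
      simpa using (hasDerivAt_id t).mul_const ⟪g' x, d⟫
    have h3 : HasDerivAt (fun t : ℝ => t ^ 2 / (2 * β) * ‖d‖ ^ 2) (t / β * ‖d‖ ^ 2) t := by
      have := ((hasDerivAt_pow 2 t).div_const (2 * β)).mul_const (‖d‖ ^ 2)
      convert this using 1
      · rfl
      · rfl
      · rw [show (2:ℕ) - 1 = 1 from rfl, pow_one]; push_cast; ring
    exact (h1.sub h2).sub h3
  have hmono : AntitoneOn ψ (Set.Icc (0:ℝ) 1) := by
    apply antitoneOn_of_deriv_nonpos (convex_Icc 0 1)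
    · exact fun t _ => ((hψd t).continuousAt).continuousWithinAt
    · exact fun t _ => ((hψd t).differentiableAt).differentiableWithinAt
    · intro t ht
      rw [interior_Icc] at ht
      rw [(hψd t).deriv]
      set z := x + t • d with hz
      have hco := hcoco z x
      have hzx : z - x = t • d := by rw [hz]; abel
      rw [hzx, real_inner_smul_right] at hco
      have hcs : ⟪g' z - g' x, d⟫ ≤ ‖g' z - g' x‖ * ‖d‖ := real_inner_le_norm _ _
      have hip : ⟪g' z, d⟫ - ⟪g' x, d⟫ = ⟪g' z - g' x, d⟫ := by
        rw [inner_sub_left]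
      rw [hip]
      set ip := ⟪g' z - g' x, d⟫ with hipdef
      set N := ‖g' z - g' x‖ with hN
      obtain ⟨ht0, ht1⟩ := ht
      rcases le_or_gt ip 0 with h | h
      · have : 0 ≤ t / β * ‖d‖ ^ 2 := by positivity
        linarith
      · have hN0 : 0 < N := by
          by_contra hc
          push_neg at hc
          have : N = 0 := le_antisymm hc (norm_nonneg _)
          rw [hipdef, hN] at *
          have : g' z - g' x = 0 := norm_eq_zero.mp this
          rw [this] at h
          simp at h
        have h4 : β * N ≤ t * ‖d‖ := by
          have h5 : t * ip ≤ t * (N * ‖d‖) := mul_le_mul_of_nonneg_left hcs ht0.le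
          nlinarith [hN0]
        have key : β * ip ≤ t * ‖d‖ ^ 2 := by
          nlinarith [norm_nonneg d, mul_le_mul_of_nonneg_left hcs hβ.le, h4]
        rw [div_mul_eq_mul_div, sub_nonpos, le_div_iff₀ hβ]
        linarith [mul_comm β ip]
  have h01 := hmono (left_mem_Icc.2 zero_le_one) (right_mem_Icc.2 zero_le_one) zero_le_one
  have h0 : ψ 0 = g x := by simp [hψ]
  have h1 : ψ 1 = g y - ⟪g' x, d⟫ - 1 / (2 * β) * ‖d‖ ^ 2 := by
    simp only [hψ, one_smul, one_pow, one_mul]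
    rw [show x + d = y by rw [hd]; abel]
  rw [h0, h1] at h01
  linarith

end Aux

/-- For convex differentiable `g` with `β`-cocoercive gradient and `γ ∈ (0, β]`,
`g_{-γ}` is proper, convex and lower semicontinuous, and
`prox_{γ g_{-γ}} = I - γ∇g`: the point `u - γ∇g(u)` is the unique minimizer of
`v ↦ g_{-γ}(v) + (1/(2γ))‖v - u‖²`. -/
theorem stmt_17 {H : Type*} [NormedAddCommGroup H] [InnerProductSpace ℝ H]
    [CompleteSpace H]
    (β γ : ℝ) (hβ : 0 < β) (hγ : 0 < γ) (hγβ : γ ≤ β)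
    (g : H → ℝ) (hgconv : ConvexOn ℝ Set.univ g)
    (g' : H → H) (hg' : ∀ x : H, HasGradientAt g (g' x) x)
    (hcoco : ∀ x y : H, ⟪g' x - g' y, x - y⟫ ≥ β * ‖g' x - g' y‖ ^ 2) :
    -- proper:
    ((∃ u : H, antiEnvelope g γ u < ⊤) ∧ (∀ u : H, ⊥ < antiEnvelope g γ u)) ∧
    -- convex:
    (∀ u v : H, ∀ t : ℝ, 0 ≤ t → t ≤ 1 →
      antiEnvelope g γ (t • u + (1 - t) • v) ≤
        (t : EReal) * antiEnvelope g γ u + ((1 - t : ℝ) : EReal) * antiEnvelope g γ v) ∧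
    -- lower semicontinuous:
    LowerSemicontinuous (antiEnvelope g γ) ∧
    -- `prox_{γ g_{-γ}}(u) = u - γ∇g(u)`:
    (∀ u : H,
      (∀ v : H,
        antiEnvelope g γ (u - γ • g' u)
            + ((1 / (2 * γ) * ‖(u - γ • g' u) - u‖ ^ 2 : ℝ) : EReal) ≤
          antiEnvelope g γ v + ((1 / (2 * γ) * ‖v - u‖ ^ 2 : ℝ) : EReal)) ∧
      (∀ w : H,
        (∀ v : H,
          antiEnvelope g γ w + ((1 / (2 * γ) * ‖w - u‖ ^ 2 : ℝ) : EReal) ≤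
            antiEnvelope g γ v + ((1 / (2 * γ) * ‖v - u‖ ^ 2 : ℝ) : EReal)) →
        w = u - γ • g' u)) := by
  have hc : (0:ℝ) < 1 / (2 * γ) := by positivity
  set c : ℝ := 1 / (2 * γ) with hcdef
  have h2cγ : c * (2 * γ) = 1 := by rw [hcdef]; field_simp
  have hcγ2 : c * γ ^ 2 = γ / 2 := by rw [hcdef]; field_simp
  -- descent with constant c
  have hdesc : ∀ x η : H, g η ≤ g x + ⟪g' x, η - x⟫ + c * ‖η - x‖ ^ 2 := by
    intro x η
    have h1 := aux_descent β hβ g g' hg' hcoco x η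
    have h2 : 1 / (2 * β) * ‖η - x‖ ^ 2 ≤ c * ‖η - x‖ ^ 2 := by
      apply mul_le_mul_of_nonneg_right _ (sq_nonneg _)
      rw [hcdef]
      gcongr
    linarith
  have h_ge : ∀ u η : H, ((g η - c * ‖u - η‖ ^ 2 : ℝ) : EReal) ≤ antiEnvelope g γ u :=
    fun u η => le_iSup (fun η : H => ((g η - c * ‖u - η‖ ^ 2 : ℝ) : EReal)) η
  have h_ne_bot : ∀ u : H, antiEnvelope g γ u ≠ ⊥ := by
    intro u h
    have := h_ge u u
    rw [h, le_bot_iff] at this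
    exact EReal.coe_ne_bot _ this
  -- the key upper bound at points of the form x - γ • g' x
  have h_le : ∀ x : H, antiEnvelope g γ (x - γ • g' x)
      ≤ ((g x - γ / 2 * ‖g' x‖ ^ 2 : ℝ) : EReal) := by
    intro x
    refine iSup_le fun η => EReal.coe_le_coe_iff.2 ?_
    have hexp : ‖x - γ • g' x - η‖ ^ 2
        = ‖x - η‖ ^ 2 - 2 * γ * ⟪g' x, x - η⟫ + γ ^ 2 * ‖g' x‖ ^ 2 := by
      rw [show x - γ • g' x - η = (x - η) - γ • g' x by abel, norm_sub_sq_real,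
        real_inner_smul_right, norm_smul, Real.norm_eq_abs, mul_pow, sq_abs,
        real_inner_comm]
      ring
    have hd := hdesc x η
    have hni : ⟪g' x, η - x⟫ = -⟪g' x, x - η⟫ := by
      rw [show η - x = -(x - η) by abel, inner_neg_right]
    have hnr : ‖η - x‖ = ‖x - η‖ := norm_sub_rev _ _
    rw [hni, hnr] at hd
    rw [hexp]
    nlinarith [hd]
  have hpu : ∀ u : H, c * ‖(u - γ • g' u) - u‖ ^ 2 = γ / 2 * ‖g' u‖ ^ 2 := by
    intro u
    rw [show (u - γ • g' u) - u = -(γ • g' u) by abel, norm_neg, norm_smul,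
      Real.norm_eq_abs, mul_pow, sq_abs]
    nlinarith [hcγ2]
  -- lower bound used for the prox characterization
  have key_low : ∀ u w : H, ((g u + c * ‖w - (u - γ • g' u)‖ ^ 2 : ℝ) : EReal)
      ≤ antiEnvelope g γ w + ((c * ‖w - u‖ ^ 2 : ℝ) : EReal) := by
    intro u w
    set p := u - γ • g' u with hp
    have h1 := add_le_add_left (h_ge w (u + (w - p))) ((c * ‖w - u‖ ^ 2 : ℝ) : EReal)
    rw [← EReal.coe_add] at h1
    refine le_trans (EReal.coe_le_coe_iff.2 ?_) h1
    have hsub := aux_subgrad g hgconv g' hg' u (u + (w - p))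
    rw [show (u + (w - p)) - u = w - p by abel] at hsub
    have e1 : ‖w - (u + (w - p))‖ ^ 2 = γ ^ 2 * ‖g' u‖ ^ 2 := by
      rw [show w - (u + (w - p)) = -(γ • g' u) by rw [hp]; abel, norm_neg, norm_smul,
        Real.norm_eq_abs, mul_pow, sq_abs]
    have e2 : ‖w - u‖ ^ 2 = ‖w - p‖ ^ 2 - 2 * γ * ⟪g' u, w - p⟫ + γ ^ 2 * ‖g' u‖ ^ 2 := by
      rw [show w - u = (w - p) - γ • g' u by rw [hp]; abel, norm_sub_sq_real,
        real_inner_smul_right, norm_smul, Real.norm_eq_abs, mul_pow, sq_abs,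
        real_inner_comm]
      ring
    rw [e1, e2]
    nlinarith [hsub]
  -- the main prox inequality : LHS value equals g u
  have h_lhs : ∀ u : H, antiEnvelope g γ (u - γ • g' u)
      + ((c * ‖(u - γ • g' u) - u‖ ^ 2 : ℝ) : EReal) ≤ ((g u : ℝ) : EReal) := by
    intro u
    have h1 := add_le_add_left (h_le u) ((c * ‖(u - γ • g' u) - u‖ ^ 2 : ℝ) : EReal)
    rw [← EReal.coe_add] at h1
    refine le_trans h1 (EReal.coe_le_coe_iff.2 ?_)
    rw [hpu u]
    ring_nf
    exact le_refl _
  have h_rhs : ∀ u v : H, ((g u : ℝ) : EReal)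
      ≤ antiEnvelope g γ v + ((c * ‖v - u‖ ^ 2 : ℝ) : EReal) := by
    intro u v
    have h1 := add_le_add_left (h_ge v u) ((c * ‖v - u‖ ^ 2 : ℝ) : EReal)
    rw [← EReal.coe_add] at h1
    refine le_trans (EReal.coe_le_coe_iff.2 (by ring_nf; exact le_refl _)) h1
  refine ⟨⟨⟨(0:H) - γ • g' 0, lt_of_le_of_lt (h_le 0) (EReal.coe_lt_top _)⟩,
      fun u => lt_of_lt_of_le (bot_lt_iff_ne_bot.2 (EReal.coe_ne_bot _)) (h_ge u u)⟩,
    ?_, ?_, ?_⟩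
  · -- convexity
    intro u v t ht0 ht1
    by_cases htz : t = 0
    · subst htz
      simp only [EReal.coe_zero, EReal.zero_mul, sub_zero, EReal.coe_one, EReal.one_mul,
        zero_smul, zero_add, one_smul]
      exact le_refl _
    by_cases hto : t = 1
    · subst hto
      simp only [EReal.coe_one, EReal.one_mul, sub_self, EReal.coe_zero, EReal.zero_mul,
        one_smul, add_zero, zero_smul]
      exact le_refl _
    have ht0' : 0 < t := lt_of_le_of_ne ht0 (Ne.symm htz)
    have ht1' : t < 1 := lt_of_le_of_ne ht1 hto
    have hs0' : 0 < 1 - t := by linarith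
    set w := t • u + (1 - t) • v with hw
    by_cases hAu : antiEnvelope g γ u = ⊤
    · rw [hAu, EReal.coe_mul_top_of_pos ht0', EReal.top_add_of_ne_bot]
      · exact le_top
      · intro h
        rcases eq_or_ne (antiEnvelope g γ v) ⊤ with hv | hv
        · rw [hv, EReal.coe_mul_top_of_pos hs0'] at h
          exact (by simp : (⊤:EReal) ≠ ⊥) h
        · obtain ⟨b, hb⟩ : ∃ b : ℝ, antiEnvelope g γ v = (b : EReal) :=
            ⟨(antiEnvelope g γ v).toReal, (EReal.coe_toReal hv (h_ne_bot v)).symm⟩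
          rw [hb, ← EReal.coe_mul] at h
          exact EReal.coe_ne_bot _ h
    by_cases hAv : antiEnvelope g γ v = ⊤
    · obtain ⟨a, ha⟩ : ∃ a : ℝ, antiEnvelope g γ u = (a : EReal) :=
        ⟨(antiEnvelope g γ u).toReal, (EReal.coe_toReal hAu (h_ne_bot u)).symm⟩
      rw [hAv, ha, ← EReal.coe_mul, EReal.coe_mul_top_of_pos hs0',
        EReal.add_top_of_ne_bot (EReal.coe_ne_bot _)]
      exact le_top
    obtain ⟨a, ha⟩ : ∃ a : ℝ, antiEnvelope g γ u = (a : EReal) :=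
      ⟨(antiEnvelope g γ u).toReal, (EReal.coe_toReal hAu (h_ne_bot u)).symm⟩
    obtain ⟨b, hb⟩ : ∃ b : ℝ, antiEnvelope g γ v = (b : EReal) :=
      ⟨(antiEnvelope g γ v).toReal, (EReal.coe_toReal hAv (h_ne_bot v)).symm⟩
    rw [ha, hb, ← EReal.coe_mul, ← EReal.coe_mul, ← EReal.coe_add]
    refine iSup_le fun η => EReal.coe_le_coe_iff.2 ?_
    have ha1 : g (η + (u - w)) - c * ‖u - (η + (u - w))‖ ^ 2 ≤ a := by
      have := h_ge u (η + (u - w)); rw [ha] at this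
      exact EReal.coe_le_coe_iff.1 this
    have hb1 : g (η + (v - w)) - c * ‖v - (η + (v - w))‖ ^ 2 ≤ b := by
      have := h_ge v (η + (v - w)); rw [hb] at this
      exact EReal.coe_le_coe_iff.1 this
    have e1 : u - (η + (u - w)) = w - η := by abel
    have e2 : v - (η + (v - w)) = w - η := by abel
    rw [e1] at ha1; rw [e2] at hb1
    have hcomb : t • (η + (u - w)) + (1 - t) • (v - w + η) = η := by
      rw [hw]; module
    have hgc := hgconv.2 (mem_univ (η + (u - w))) (mem_univ (v - w + η)) ht0 (le_of_lt hs0')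
      (by ring)
    rw [hcomb] at hgc
    simp only [smul_eq_mul] at hgc
    rw [show v - w + η = η + (v - w) by abel] at hgc
    nlinarith [mul_le_mul_of_nonneg_left ha1 ht0, mul_le_mul_of_nonneg_left hb1 hs0'.le, hgc]
  · -- lower semicontinuity
    apply lowerSemicontinuous_iSup
    intro η
    apply Continuous.lowerSemicontinuous
    apply continuous_coe_real_ereal.comp
    exact (continuous_const.sub (continuous_const.mul
      (((continuous_id.sub continuous_const).norm).pow 2)))
  · -- prox
    intro u
    constructor
    · intro v
      exact le_trans (h_lhs u) (h_rhs u v)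
    · intro w hwmin
      have h1 : antiEnvelope g γ w + ((c * ‖w - u‖ ^ 2 : ℝ) : EReal) ≤ ((g u : ℝ) : EReal) :=
        le_trans (hwmin (u - γ • g' u)) (h_lhs u)
      have h2 := le_trans (key_low u w) h1
      have h3 : g u + c * ‖w - (u - γ • g' u)‖ ^ 2 ≤ g u := EReal.coe_le_coe_iff.1 h2
      have h4 : ‖w - (u - γ • g' u)‖ ^ 2 ≤ 0 := by nlinarith
      have h5 : ‖w - (u - γ • g' u)‖ = 0 := by
        nlinarith [norm_nonneg (w - (u - γ • g' u)), sq_nonneg ‖w - (u - γ • g' u)‖]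
      have := norm_eq_zero.mp h5
      rwa [sub_eq_zero] at this
end

section
/- Let F : [0,∞) → [0,∞) be locally absolutely continuous with F ∈ L^p([0,∞)) for some 1 ≤ p < ∞, and let G : [0,∞) → ℝ with G ∈ L^r([0,∞)) for some 1 ≤ r ≤ ∞, such that (d/dt)F(t) ≤ G(t) for almost every t ∈ [0,∞). Then lim_{t→∞} F(t) = 0. -/
open MeasureTheory

/-- Integrability on a finite-measure subset of `[0,∞)` from an `Lᵖ` bound. -/
lemma aux_memLp_integrableOn {f : ℝ → ℝ} {r : ENNReal} (hr : 1 ≤ r)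
    (hf : MemLp f r (volume.restrict (Set.Ici (0 : ℝ)))) {s : Set ℝ}
    (hs : MeasurableSet s) (hsub : s ⊆ Set.Ici (0 : ℝ)) (hfin : volume s < ⊤) :
    IntegrableOn f s volume := by
  have h1 := hf.restrict s
  rw [Measure.restrict_restrict hs, Set.inter_eq_left.mpr hsub] at h1
  haveI : IsFiniteMeasure (volume.restrict s) :=
    ⟨by rwa [Measure.restrict_apply_univ]⟩
  exact h1.integrable hr

/-- The tail integrals of an integrable function on `(0,∞)` tend to zero. -/
lemma aux_tail_tendsto {f : ℝ → ℝ} (hf : IntegrableOn f (Set.Ioi (0 : ℝ)) volume) :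
    Filter.Tendsto (fun T => ∫ x in Set.Ioi T, f x) Filter.atTop (nhds 0) := by
  have h1 : Filter.Tendsto (fun T : ℝ => ∫ x in (0 : ℝ)..T, f x) Filter.atTop
      (nhds (∫ x in Set.Ioi (0 : ℝ), f x)) :=
    intervalIntegral_tendsto_integral_Ioi 0 hf Filter.tendsto_id
  have h2 : ∀ᶠ T in Filter.atTop,
      (∫ x in Set.Ioi (0 : ℝ), f x) - (∫ x in (0 : ℝ)..T, f x) = ∫ x in Set.Ioi T, f x := by
    filter_upwards [Filter.eventually_ge_atTop (0 : ℝ)] with T hT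
    have hu : Set.Ioc 0 T ∪ Set.Ioi T = Set.Ioi (0 : ℝ) := Set.Ioc_union_Ioi_eq_Ioi hT
    have hd : Disjoint (Set.Ioc (0 : ℝ) T) (Set.Ioi T) := Set.Ioc_disjoint_Ioi le_rfl
    have hsum := MeasureTheory.setIntegral_union hd measurableSet_Ioi
      (hf.mono_set Set.Ioc_subset_Ioi_self) (hf.mono_set (Set.Ioi_subset_Ioi hT))
    rw [hu] at hsum
    rw [intervalIntegral.integral_of_le hT]
    linarith
  have h3 : Filter.Tendsto
      (fun T : ℝ => (∫ x in Set.Ioi (0 : ℝ), f x) - (∫ x in (0 : ℝ)..T, f x))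
      Filter.atTop (nhds ((∫ x in Set.Ioi (0 : ℝ), f x) - ∫ x in Set.Ioi (0 : ℝ), f x)) :=
    tendsto_const_nhds.sub h1
  rw [sub_self] at h3
  exact h3.congr' h2

/-- If `F : [0,∞) → [0,∞)` is locally absolutely continuous, `F ∈ Lᵖ([0,∞))` for some
`1 ≤ p < ∞`, `G ∈ Lʳ([0,∞))` for some `1 ≤ r ≤ ∞`, and `F'(t) ≤ G(t)` a.e., then
`F(t) → 0` as `t → ∞`. -/
theorem stmt_19
    (F F' G : ℝ → ℝ)
    (hFnonneg : ∀ t : ℝ, 0 ≤ t → 0 ≤ F t)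
    (hderiv : ∀ᵐ t ∂(volume.restrict (Set.Ici (0 : ℝ))), HasDerivAt F (F' t) t)
    (hint : ∀ t : ℝ, 0 ≤ t → F t = F 0 + ∫ s in (0 : ℝ)..t, F' s)
    (p : ENNReal) (hp1 : 1 ≤ p) (hp2 : p < ⊤)
    (hFp : MemLp F p (volume.restrict (Set.Ici (0 : ℝ))))
    (r : ENNReal) (hr1 : 1 ≤ r)
    (hGr : MemLp G r (volume.restrict (Set.Ici (0 : ℝ))))
    (hFG : ∀ᵐ t ∂(volume.restrict (Set.Ici (0 : ℝ))), F' t ≤ G t) :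
    Filter.Tendsto F Filter.atTop (nhds 0) := by
  set μ0 := volume.restrict (Set.Ici (0 : ℝ)) with hμ0
  -- exponent q
  have hp0 : p ≠ 0 := (zero_lt_one.trans_le hp1).ne'
  set q := p.toReal with hqdef
  have hq1 : 1 ≤ q := by
    rw [← ENNReal.toReal_one]
    exact ENNReal.toReal_mono hp2.ne hp1
  have hq0 : 0 < q := lt_of_lt_of_le zero_lt_one hq1
  -- |F|^q is integrable on [0,∞)
  have hH : Integrable (fun x => ‖F x‖ ^ q) μ0 := hFp.integrable_norm_rpow hp0 hp2.ne
  have hHO : IntegrableOn (fun x => ‖F x‖ ^ q) (Set.Ici (0 : ℝ)) volume := hH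
  by_cases hA : ∀ t : ℝ, 0 ≤ t → IntervalIntegrable F' volume 0 t
  · -- main branch: FTC applies on every interval
    have hGint : ∀ s t : ℝ, 0 ≤ s → s ≤ t → IntervalIntegrable G volume s t := by
      intro s t hs hst
      rw [intervalIntegrable_iff_integrableOn_Ioc_of_le hst]
      exact aux_memLp_integrableOn hr1 hGr measurableSet_Ioc
        (fun x hx => le_trans hs hx.1.le) measure_Ioc_lt_top
    have hkey : ∀ s t : ℝ, 0 ≤ s → s ≤ t → F t ≤ F s + ∫ x in s..t, G x := by
      intro s t hs hst
      have h0t := hA t (hs.trans hst)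
      have h0s : IntervalIntegrable F' volume 0 s := h0t.mono_set (by
        rw [Set.uIcc_of_le hs, Set.uIcc_of_le (hs.trans hst)]
        exact Set.Icc_subset_Icc le_rfl hst)
      have hstI : IntervalIntegrable F' volume s t := h0t.mono_set (by
        rw [Set.uIcc_of_le hst, Set.uIcc_of_le (hs.trans hst)]
        exact Set.Icc_subset_Icc hs le_rfl)
      have hFt := hint t (hs.trans hst)
      have hFs := hint s hs
      have hadd := intervalIntegral.integral_add_adjacent_intervals h0s hstI
      have hae : ∀ᵐ x ∂volume.restrict (Set.Icc s t), F' x ≤ G x :=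
        ae_restrict_of_ae_restrict_of_subset (fun x hx => hs.trans hx.1) hFG
      have hmono : (∫ x in s..t, F' x) ≤ ∫ x in s..t, G x :=
        intervalIntegral.integral_mono_ae_restrict hst hstI (hGint s t hs hst) hae
      linarith
    -- tail of |F|^q
    have hHtail := aux_tail_tendsto (hHO.mono_set Set.Ioi_subset_Ici_self)
    -- smallness of ∫ G on short intervals far to the right
    have hGtail : ∀ ε : ℝ, 0 < ε → ∃ δ : ℝ, 0 < δ ∧ ∃ T : ℝ, 0 ≤ T ∧
        ∀ s t : ℝ, T ≤ s → s ≤ t → t ≤ s + δ → (∫ x in s..t, G x) ≤ ε := by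
      intro ε hε
      by_cases hr : r = ⊤
      · subst hr
        set C := (eLpNorm G ⊤ μ0).toReal with hCdef
        have hC0 : 0 ≤ C := ENNReal.toReal_nonneg
        have hfin : eLpNorm G ⊤ μ0 ≠ ⊤ := hGr.2.ne
        have hCbound : ∀ᵐ x ∂μ0, G x ≤ C := by
          have h1 : ∀ᵐ x ∂μ0, (‖G x‖₊ : ENNReal) ≤ eLpNormEssSup G μ0 := ae_le_eLpNormEssSup
          filter_upwards [h1] with x hx
          have hx2 : (‖G x‖₊ : ENNReal) ≤ eLpNorm G ⊤ μ0 := by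
            rwa [eLpNorm_exponent_top]
          have hx3 : ((‖G x‖₊ : ENNReal)).toReal ≤ C := ENNReal.toReal_mono hfin hx2
          have hx4 : ((‖G x‖₊ : ENNReal)).toReal = |G x| := by
            simp [Real.norm_eq_abs]
          calc G x ≤ |G x| := le_abs_self _
            _ ≤ C := by rw [← hx4]; exact hx3
        refine ⟨ε / (C + 1), by positivity, 0, le_rfl, ?_⟩
        intro s t hTs hst hts
        have hGst := hGint s t hTs hst
        have hconst : IntervalIntegrable (fun _ => C) volume s t := intervalIntegrable_const
        have hae : ∀ᵐ x ∂volume.restrict (Set.Icc s t), G x ≤ C :=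
          ae_restrict_of_ae_restrict_of_subset (fun x hx => hTs.trans hx.1) hCbound
        have h1 := intervalIntegral.integral_mono_ae_restrict hst hGst hconst hae
        have h2 : (∫ _ in s..t, C) = (t - s) * C := by
          rw [intervalIntegral.integral_const, smul_eq_mul]
        have h3 : (t - s) * C ≤ (ε / (C + 1)) * C := by
          apply mul_le_mul_of_nonneg_right _ hC0
          linarith
        have h4 : (ε / (C + 1)) * C ≤ ε := by
          rw [div_mul_eq_mul_div, div_le_iff₀ (by positivity)]
          nlinarith
        linarith
      · have hr0 : r ≠ 0 := (zero_lt_one.trans_le hr1).ne'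
        set rr := r.toReal with hrrdef
        have hrr1 : 1 ≤ rr := by
          rw [← ENNReal.toReal_one]
          exact ENNReal.toReal_mono hr hr1
        have hK : Integrable (fun x => ‖G x‖ ^ rr) μ0 := hGr.integrable_norm_rpow hr0 hr
        have hKO : IntegrableOn (fun x => ‖G x‖ ^ rr) (Set.Ici (0 : ℝ)) volume := hK
        have htail := aux_tail_tendsto (hKO.mono_set Set.Ioi_subset_Ici_self)
        have hev := (htail.eventually_lt_const (half_pos hε)).and
          (Filter.eventually_ge_atTop (0 : ℝ))
        obtain ⟨T, hT⟩ := hev.exists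
        refine ⟨ε / 2, half_pos hε, T, hT.2, ?_⟩
        intro s t hTs hst hts
        have hs0 : 0 ≤ s := hT.2.trans hTs
        have hGst := hGint s t hs0 hst
        have hKii : IntervalIntegrable (fun x => ‖G x‖ ^ rr) volume s t := by
          rw [intervalIntegrable_iff_integrableOn_Ioc_of_le hst]
          exact hKO.mono_set (fun x hx => le_trans hs0 hx.1.le)
        have hpt : ∀ x : ℝ, G x ≤ 1 + ‖G x‖ ^ rr := by
          intro x
          rcases le_or_gt (‖G x‖) 1 with h | h
          · have : (0:ℝ) ≤ ‖G x‖ ^ rr := Real.rpow_nonneg (norm_nonneg _) _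
            calc G x ≤ ‖G x‖ := Real.le_norm_self _
              _ ≤ 1 := h
              _ ≤ 1 + ‖G x‖ ^ rr := by linarith
          · have h1 : ‖G x‖ ^ (1:ℝ) ≤ ‖G x‖ ^ rr :=
              Real.rpow_le_rpow_of_exponent_le h.le hrr1
            rw [Real.rpow_one] at h1
            calc G x ≤ ‖G x‖ := Real.le_norm_self _
              _ ≤ ‖G x‖ ^ rr := h1
              _ ≤ 1 + ‖G x‖ ^ rr := by linarith
        have hdom : IntervalIntegrable (fun x => 1 + ‖G x‖ ^ rr) volume s t :=
          intervalIntegrable_const.add hKii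
        have hmono : (∫ x in s..t, G x) ≤ ∫ x in s..t, (1 + ‖G x‖ ^ rr) :=
          intervalIntegral.integral_mono_ae_restrict hst hGst hdom
            (Filter.Eventually.of_forall fun x => hpt x)
        have hsplit : (∫ x in s..t, (1 + ‖G x‖ ^ rr))
            = (t - s) + ∫ x in Set.Ioc s t, ‖G x‖ ^ rr := by
          rw [intervalIntegral.integral_add intervalIntegrable_const hKii,
            intervalIntegral.integral_const, smul_eq_mul, mul_one,
            intervalIntegral.integral_of_le hst]
        have htail2 : (∫ x in Set.Ioc s t, ‖G x‖ ^ rr) ≤ ∫ x in Set.Ioi T, ‖G x‖ ^ rr :=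
          setIntegral_mono_set (hKO.mono_set (fun x hx => hT.2.trans hx.le))
            (Filter.Eventually.of_forall fun x => Real.rpow_nonneg (norm_nonneg _) _)
            (HasSubset.Subset.eventuallyLE (show Set.Ioc s t ⊆ Set.Ioi T from fun x hx => lt_of_le_of_lt hTs hx.1))
        have := hT.1
        linarith
    -- final ε-argument
    rw [Metric.tendsto_atTop]
    intro ε hε
    obtain ⟨δ, hδ, T, hT0, hGb⟩ := hGtail (ε / 2) (half_pos hε)
    have hηpos : 0 < (ε / 2) ^ q * δ := by
      have : (0:ℝ) < (ε / 2) ^ q := Real.rpow_pos_of_pos (half_pos hε) _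
      positivity
    obtain ⟨T₁, hT₁⟩ := Filter.eventually_atTop.mp (hHtail.eventually_lt_const hηpos)
    refine ⟨max T (max T₁ 0) + δ, ?_⟩
    intro t ht
    have h1 : T ≤ t - δ := by
      have := le_max_left T (max T₁ 0); linarith
    have h2 : T₁ ≤ t - δ := by
      have := (le_max_left T₁ 0).trans (le_max_right T (max T₁ 0)); linarith
    have h3 : 0 ≤ t - δ := by
      have := (le_max_right T₁ 0).trans (le_max_right T (max T₁ 0)); linarith
    have ht0 : 0 ≤ t := by linarith
    rw [Real.dist_eq, sub_zero, abs_of_nonneg (hFnonneg t ht0)]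
    by_contra hcon
    push_neg at hcon
    have hlow : ∀ s ∈ Set.Ioc (t - δ) t, (ε / 2) ^ q ≤ ‖F s‖ ^ q := by
      intro s hs
      have hs0 : 0 ≤ s := h3.trans hs.1.le
      have hk := hkey s t hs0 hs.2
      have hGs := hGb s t (h1.trans hs.1.le) hs.2 (by linarith [hs.1])
      have hFs : ε / 2 ≤ F s := by linarith
      rw [Real.norm_eq_abs, abs_of_nonneg (hFnonneg s hs0)]
      exact Real.rpow_le_rpow (by positivity) hFs hq0.le
    have hIone : IntegrableOn (fun x => ‖F x‖ ^ q) (Set.Ioc (t - δ) t) volume :=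
      hHO.mono_set (fun x hx => h3.trans hx.1.le)
    have hlb : (ε / 2) ^ q * δ ≤ ∫ x in Set.Ioc (t - δ) t, ‖F x‖ ^ q := by
      have hco : (∫ _ in Set.Ioc (t - δ) t, (ε / 2) ^ q) = (ε / 2) ^ q * δ := by
        rw [setIntegral_const, smul_eq_mul, measureReal_def, Real.volume_Ioc]
        rw [show t - (t - δ) = δ by ring, ENNReal.toReal_ofReal hδ.le, mul_comm]
      rw [← hco]
      exact setIntegral_mono_on (integrableOn_const measure_Ioc_lt_top.ne)
        hIone measurableSet_Ioc hlow
    have hub : (∫ x in Set.Ioc (t - δ) t, ‖F x‖ ^ q) ≤ ∫ x in Set.Ioi (t - δ), ‖F x‖ ^ q :=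
      setIntegral_mono_set (hHO.mono_set (fun x hx => h3.trans hx.le))
        (Filter.Eventually.of_forall fun x => Real.rpow_nonneg (norm_nonneg _) _)
        (Set.Ioc_subset_Ioi_self.eventuallyLE)
    have := hT₁ (t - δ) h2
    linarith
  · -- degenerate branch: F' is not interval integrable, so F is eventually constant 0
    push_neg at hA
    obtain ⟨t₀, ht₀0, ht₀⟩ := hA
    have hconst : ∀ t : ℝ, t₀ ≤ t → F t = F 0 := by
      intro t ht
      have h0t : ¬ IntervalIntegrable F' volume 0 t := by
        intro h
        exact ht₀ (h.mono_set (by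
          rw [Set.uIcc_of_le ht₀0, Set.uIcc_of_le (ht₀0.trans ht)]
          exact Set.Icc_subset_Icc le_rfl ht))
      rw [hint t (ht₀0.trans ht), intervalIntegral.integral_undef h0t, add_zero]
    have hconstI : IntegrableOn (fun _ => ‖F 0‖ ^ q) (Set.Ici t₀) volume := by
      refine ((hHO.mono_set (Set.Ici_subset_Ici.mpr ht₀0)).congr_fun ?_ measurableSet_Ici)
      intro x hx
      simp only [hconst x hx]
    rw [integrableOn_const_iff] at hconstI
    have hF0 : F 0 = 0 := by
      rcases hconstI with h | h
      · have : ‖F 0‖ = 0 := by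
          by_contra hne
          have hpos : 0 < ‖F 0‖ := lt_of_le_of_ne (norm_nonneg _) (Ne.symm hne)
          have := Real.rpow_pos_of_pos hpos q
          exact this.ne' (enorm_eq_zero.mp h)
        simpa using this
      · rw [Real.volume_Ici] at h
        exact absurd h (by simp)
    have hzero : Filter.Tendsto (fun _ : ℝ => (0 : ℝ)) Filter.atTop (nhds 0) :=
      tendsto_const_nhds
    refine hzero.congr' ?_
    filter_upwards [Filter.eventually_ge_atTop t₀] with t ht
    rw [hconst t ht, hF0]
end
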